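/- arXiv:1109.4710 — 5 statements merged into one kernel-verified Lean document; each statement's English description precedes it below -/
import Mathlib

section
/- The group UT_n(K) of n×n lower unitriangular matrices over a field K is generated by the elementary transvections t_{i+1,i}(α), for 1 ≤ i ≤ n−1 and α ∈ K. -/
open Matrix

/-- A square matrix is lower unitriangular if it has `1`s on the diagonal and
`0`s above the diagonal. -/
def IsLowerUni {n : ℕ} {R : Type*} [CommRing R] (A : Matrix (Fin n) (Fin n) R) : Prop :=
  (∀ i, A i i = 1) ∧ ∀ i j : Fin n, i < j → A i j = 0

theorem IsLowerUni.one {n : ℕ} {R : Type*} [CommRing R] :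
    IsLowerUni (1 : Matrix (Fin n) (Fin n) R) :=
  ⟨fun i => by simp, fun i j hij => by simp [Matrix.one_apply, Fin.ne_of_lt hij]⟩

theorem IsLowerUni.mul {n : ℕ} {R : Type*} [CommRing R]
    {A B : Matrix (Fin n) (Fin n) R} (hA : IsLowerUni A) (hB : IsLowerUni B) :
    IsLowerUni (A * B) := by
  constructor
  · intro i
    rw [Matrix.mul_apply, Finset.sum_eq_single i]
    · rw [hA.1, hB.1, one_mul]
    · intro k _ hk
      rcases lt_or_gt_of_ne hk with h | h
      · rw [hB.2 k i h, mul_zero]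
      · rw [hA.2 i k h, zero_mul]
    · intro h; exact absurd (Finset.mem_univ i) h
  · intro i j hij
    rw [Matrix.mul_apply]
    apply Finset.sum_eq_zero
    intro k _
    rcases le_or_gt k i with h | h
    · rw [hB.2 k j (lt_of_le_of_lt h hij), mul_zero]
    · rw [hA.2 i k h, zero_mul]

/-- The unitriangular group `UT_n(R)`: the subgroup of the units of the matrix
ring consisting of the lower unitriangular matrices. -/
def UT (n : ℕ) (R : Type*) [CommRing R] : Subgroup (Matrix (Fin n) (Fin n) R)ˣ where
  carrier := {A | IsLowerUni (A : Matrix (Fin n) (Fin n) R) ∧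
    IsLowerUni ((A⁻¹ : (Matrix (Fin n) (Fin n) R)ˣ) : Matrix (Fin n) (Fin n) R)}
  one_mem' := ⟨IsLowerUni.one, by simpa using IsLowerUni.one⟩
  mul_mem' := by
    intro a b ha hb
    refine ⟨?_, ?_⟩
    · simpa [Units.val_mul] using ha.1.mul hb.1
    · simpa [_root_.mul_inv_rev, Units.val_mul] using hb.2.mul ha.2
  inv_mem' := by
    intro a ha
    exact ⟨ha.2, by simpa using ha.1⟩

namespace UTaux

variable {n : ℕ} {K : Type*} [Field K]

def gS (n : ℕ) (K : Type*) [Field K] : Set (Matrix (Fin n) (Fin n) K)ˣ :=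
  {A : (Matrix (Fin n) (Fin n) K)ˣ | ∃ (i j : Fin n) (α : K),
    (i : ℕ) = (j : ℕ) + 1 ∧
    (A : Matrix (Fin n) (Fin n) K) = 1 + Matrix.single i j α}

lemma trans_mul (i j : Fin n) (hij : j ≠ i) (α β : K) :
    (1 + Matrix.single i j α) * (1 + Matrix.single i j β) =
      1 + Matrix.single i j (α + β) := by
  have h0 : Matrix.single i j α * Matrix.single i j β = 0 :=
    Matrix.single_mul_single_of_ne α i j _ hij β
  rw [mul_add, add_mul, add_mul, mul_one, one_mul, h0, add_zero,
    Matrix.single_add, add_assoc, mul_one]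

def Tu (i j : Fin n) (hij : j ≠ i) (α : K) : (Matrix (Fin n) (Fin n) K)ˣ :=
  ⟨1 + Matrix.single i j α, 1 + Matrix.single i j (-α),
   by rw [trans_mul i j hij, add_neg_cancel]; simp,
   by rw [trans_mul i j hij, neg_add_cancel]; simp⟩

@[simp] lemma Tu_val (i j : Fin n) (hij : j ≠ i) (α : K) :
    (Tu i j hij α : Matrix (Fin n) (Fin n) K) = 1 + Matrix.single i j α := rfl

@[simp] lemma Tu_inv_val (i j : Fin n) (hij : j ≠ i) (α : K) :
    ((Tu i j hij α)⁻¹ : (Matrix (Fin n) (Fin n) K)ˣ).val =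
      1 + Matrix.single i j (-α) := rfl

lemma isLowerUni_one_add_std {i j : Fin n} (h : j < i) (α : K) :
    IsLowerUni (1 + Matrix.single i j α) := by
  constructor
  · intro k
    have h1 : Matrix.single i j α k k = 0 := by
      apply Matrix.single_apply_of_ne
      rintro ⟨rfl, rfl⟩; exact absurd h (lt_irrefl _)
    simp [Matrix.add_apply, h1]
  · intro k l hkl
    have h1 : Matrix.single i j α k l = 0 := by
      apply Matrix.single_apply_of_ne
      rintro ⟨rfl, rfl⟩; exact absurd (h.trans hkl) (lt_irrefl _)
    simp [Matrix.add_apply, Matrix.one_apply, Fin.ne_of_lt hkl, h1]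

lemma Tu_mem_UT {i j : Fin n} (h : j < i) (α : K) :
    Tu i j (Fin.ne_of_lt h) α ∈ UT n K :=
  ⟨isLowerUni_one_add_std h α, isLowerUni_one_add_std h (-α)⟩

lemma std_neg (i j : Fin n) (a : K) :
    Matrix.single i j (-a) = -Matrix.single i j a := by
  have := Matrix.single_add i j a (-a)
  rw [add_neg_cancel] at this
  simp only [Matrix.single_zero] at this
  exact eq_neg_of_add_eq_zero_right this.symm

lemma comm_lemma (i k j : Fin n) (hik : k ≠ i) (hkj : j ≠ k) (hij : j ≠ i) (α β : K) :
    (1 + Matrix.single i k α) * (1 + Matrix.single k j β) *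
      (1 + Matrix.single i k (-α)) * (1 + Matrix.single k j (-β)) =
      1 + Matrix.single i j (α * β) := by
  have e1 : ∀ a b : K, Matrix.single i k a * Matrix.single i k b = 0 :=
    fun a b => Matrix.single_mul_single_of_ne a i k _ hik b
  have e2 : ∀ a b : K, Matrix.single k j a * Matrix.single k j b = 0 :=
    fun a b => Matrix.single_mul_single_of_ne a k j _ hkj b
  have e3 : ∀ a b : K, Matrix.single k j a * Matrix.single i k b = 0 :=
    fun a b => Matrix.single_mul_single_of_ne a k j _ hij b
  have e4 : ∀ a b : K, Matrix.single i j a * Matrix.single i k b = 0 :=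
    fun a b => Matrix.single_mul_single_of_ne a i j _ hij b
  have e5 : ∀ a b : K, Matrix.single i j a * Matrix.single k j b = 0 :=
    fun a b => Matrix.single_mul_single_of_ne a i j _ hkj b
  have e6 : ∀ a b : K, Matrix.single i k a * Matrix.single k j b =
      Matrix.single i j (a * b) :=
    fun a b => Matrix.single_mul_single_same a i k j b
  have s1 : (1 + Matrix.single i k α) * (1 + Matrix.single k j β) =
      1 + Matrix.single i k α + Matrix.single k j β +
        Matrix.single i j (α * β) := by
    simp only [mul_add, add_mul, one_mul, mul_one, e6]; abel
  have s2 : (1 + Matrix.single i k α + Matrix.single k j β +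
        Matrix.single i j (α * β)) * (1 + Matrix.single i k (-α)) =
      1 + Matrix.single k j β + Matrix.single i j (α * β) := by
    simp only [mul_add, add_mul, one_mul, mul_one, e1, e3, e4, add_zero]
    rw [std_neg]; abel
  have s3 : (1 + Matrix.single k j β + Matrix.single i j (α * β)) *
        (1 + Matrix.single k j (-β)) =
      1 + Matrix.single i j (α * β) := by
    simp only [mul_add, add_mul, one_mul, mul_one, e2, e5, add_zero]
    rw [std_neg]; abel
  rw [s1, s2, s3]

lemma Tu_mem_closure_aux : ∀ (d : ℕ) (i j : Fin n) (h : j < i) (α : K),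
    (i : ℕ) = (j : ℕ) + d → Tu i j (Fin.ne_of_lt h) α ∈ Subgroup.closure (gS n K) := by
  intro d
  induction d using Nat.strong_induction_on with
  | _ d ih =>
    intro i j h α hd
    have hji : (j : ℕ) < (i : ℕ) := h
    rcases Nat.lt_or_ge d 2 with hd2 | hd2
    · have hd1 : d = 1 := by omega
      subst hd1
      exact Subgroup.subset_closure ⟨i, j, α, hd, rfl⟩
    · have hkn : (j : ℕ) + 1 < n := by have := i.isLt; omega
      set k : Fin n := ⟨(j : ℕ) + 1, hkn⟩ with hkdef
      have hjk : j < k := by simp [Fin.lt_def, hkdef]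
      have hki : k < i := by simp only [Fin.lt_def, hkdef]; omega
      have key : Tu i j (Fin.ne_of_lt h) α =
          Tu i k (Fin.ne_of_lt hki) α * Tu k j (Fin.ne_of_lt hjk) 1 *
          (Tu i k (Fin.ne_of_lt hki) α)⁻¹ * (Tu k j (Fin.ne_of_lt hjk) 1)⁻¹ := by
        apply Units.ext
        simp only [Units.val_mul, Tu_val, Tu_inv_val]
        rw [comm_lemma i k j (Fin.ne_of_lt hki) (Fin.ne_of_lt hjk) (Fin.ne_of_lt h), mul_one]
      rw [key]
      have h1 : Tu i k (Fin.ne_of_lt hki) α ∈ Subgroup.closure (gS n K) :=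
        ih (d - 1) (by omega) i k hki α (by simp [hkdef]; omega)
      have h2 : Tu k j (Fin.ne_of_lt hjk) 1 ∈ Subgroup.closure (gS n K) :=
        Subgroup.subset_closure ⟨k, j, 1, by simp [hkdef], rfl⟩
      exact mul_mem (mul_mem (mul_mem h1 h2) (inv_mem h1)) (inv_mem h2)

open scoped Classical in
noncomputable def supp (A : Matrix (Fin n) (Fin n) K) : Finset (Fin n × Fin n) :=
  Finset.univ.filter fun p => p.2 < p.1 ∧ A p.1 p.2 ≠ 0

lemma eq_one_of_supp_empty {A : Matrix (Fin n) (Fin n) K} (hA : IsLowerUni A)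
    (h : supp A = ∅) : A = 1 := by
  ext a b
  rcases lt_trichotomy a b with hab | hab | hab
  · rw [hA.2 a b hab, Matrix.one_apply_ne (Fin.ne_of_lt hab)]
  · subst hab; rw [hA.1 a, Matrix.one_apply_eq]
  · have : A a b = 0 := by
      by_contra hc
      have : (a, b) ∈ supp A := by simp [supp, hab, hc]
      simp [h] at this
    rw [this, Matrix.one_apply_ne (Fin.ne_of_gt hab)]

lemma mem_closure_of_mem_UT : ∀ (N : ℕ) (A : (Matrix (Fin n) (Fin n) K)ˣ),
    A ∈ UT n K → (supp (A : Matrix (Fin n) (Fin n) K)).card ≤ N →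
    A ∈ Subgroup.closure (gS n K) := by
  intro N
  induction N with
  | zero =>
    intro A hA hcard
    have hs : supp (A : Matrix (Fin n) (Fin n) K) = ∅ :=
      Finset.card_eq_zero.mp (Nat.le_zero.mp hcard)
    have : A = 1 := Units.ext (eq_one_of_supp_empty hA.1 hs)
    rw [this]; exact one_mem _
  | succ N ih =>
    intro A hA hcard
    by_cases hs : supp (A : Matrix (Fin n) (Fin n) K) = ∅
    · have : A = 1 := Units.ext (eq_one_of_supp_empty hA.1 hs)
      rw [this]; exact one_mem _
    · have hne : (supp (A : Matrix (Fin n) (Fin n) K)).Nonempty :=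
        Finset.nonempty_iff_ne_empty.mpr hs
      set js := (supp (A : Matrix (Fin n) (Fin n) K)).image Prod.snd with hjsdef
      have hjs : js.Nonempty := hne.image _
      set j := js.min' hjs with hjdef
      obtain ⟨p, hp, hpj⟩ := Finset.mem_image.mp (js.min'_mem hjs)
      set i := p.1 with hidef
      simp only [supp, Finset.mem_filter, Finset.mem_univ, true_and] at hp
      rw [hpj] at hp
      have hji : j < i := hp.1
      have hAij : (A : Matrix (Fin n) (Fin n) K) i j ≠ 0 := hp.2
      have hmemij : (i, j) ∈ supp (A : Matrix (Fin n) (Fin n) K) := by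
        simp [supp, hji, hAij]
      have hrowj : ∀ l, l ≠ j → (A : Matrix (Fin n) (Fin n) K) j l = 0 := by
        intro l hl
        rcases lt_or_gt_of_ne hl with h1 | h1
        · by_contra hc
          have hmem : (j, l) ∈ supp (A : Matrix (Fin n) (Fin n) K) := by
            simp [supp, h1, hc]
          have hlj : l ∈ js := Finset.mem_image.mpr ⟨(j, l), hmem, rfl⟩
          exact absurd (js.min'_le l hlj) (not_le.mpr h1)
        · exact hA.1.2 j l h1
      set α := (A : Matrix (Fin n) (Fin n) K) i j with hαdef
      set T := Tu i j (Fin.ne_of_lt hji) α with hTdef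
      set B := T⁻¹ * A with hBdef
      have hBval : (B : Matrix (Fin n) (Fin n) K) =
          (A : Matrix (Fin n) (Fin n) K) +
            Matrix.single i j (-α) * (A : Matrix (Fin n) (Fin n) K) := by
        show ((T⁻¹).val * (A : Matrix (Fin n) (Fin n) K)) = _
        rw [hTdef, Tu_inv_val, add_mul, one_mul]
      have hBentry : ∀ a b, (B : Matrix (Fin n) (Fin n) K) a b =
          if a = i ∧ b = j then 0 else (A : Matrix (Fin n) (Fin n) K) a b := by
        intro a b
        rw [hBval, Matrix.add_apply]
        by_cases ha : a = i
        · subst ha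
          rw [Matrix.single_mul_apply_same]
          by_cases hb : b = j
          · subst hb
            rw [hA.1.1 j]
            simp [hαdef]
          · rw [hrowj b hb]
            simp [hb]
        · rw [Matrix.single_mul_apply_of_ne (-α) i j a b ha]
          simp [ha]
      have hsub : supp (B : Matrix (Fin n) (Fin n) K) ⊆
          (supp (A : Matrix (Fin n) (Fin n) K)).erase (i, j) := by
        intro q hq
        simp only [supp, Finset.mem_filter, Finset.mem_univ, true_and] at hq
        rw [Finset.mem_erase]
        have hqne : q ≠ (i, j) := by
          rintro rfl
          have := hq.2
          rw [hBentry] at this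
          simp at this
        constructor
        · exact hqne
        · simp only [supp, Finset.mem_filter, Finset.mem_univ, true_and]
          refine ⟨hq.1, ?_⟩
          have := hq.2
          rw [hBentry] at this
          intro hz
          apply this
          by_cases hc : q.1 = i ∧ q.2 = j
          · simp [hc]
          · simp [hc, hz]
      have hcardB : (supp (B : Matrix (Fin n) (Fin n) K)).card ≤ N := by
        have h1 := Finset.card_le_card hsub
        have h2 := Finset.card_erase_of_mem hmemij
        have h3 : 0 < (supp (A : Matrix (Fin n) (Fin n) K)).card :=
          Finset.card_pos.mpr ⟨(i, j), hmemij⟩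
        omega
      have hT_UT : T ∈ UT n K := Tu_mem_UT hji α
      have hB_UT : B ∈ UT n K := mul_mem (inv_mem hT_UT) hA
      have hBcl := ih B hB_UT hcardB
      have hTcl : T ∈ Subgroup.closure (gS n K) :=
        Tu_mem_closure_aux ((i : ℕ) - (j : ℕ)) i j hji α (by have : (j:ℕ) < i := hji; omega)
      have hAeq : A = T * B := by rw [hBdef, mul_inv_cancel_left]
      rw [hAeq]
      exact mul_mem hTcl hBcl

end UTaux

/-- Over a field `K`, the group `UT_n(K)` of lower unitriangular
matrices is generated by the elementary transvections
`t_{i+1,i}(α) = 1 + α E_{i+1,i}`, `1 ≤ i ≤ n-1`, `α ∈ K`. -/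
theorem UT_generated_by_transvections (n : ℕ) (K : Type*) [Field K] :
    Subgroup.closure
        {A : (Matrix (Fin n) (Fin n) K)ˣ | ∃ (i j : Fin n) (α : K),
          (i : ℕ) = (j : ℕ) + 1 ∧
          (A : Matrix (Fin n) (Fin n) K) = 1 + Matrix.single i j α} =
      UT n K := by
  have hset : {A : (Matrix (Fin n) (Fin n) K)ˣ | ∃ (i j : Fin n) (α : K),
      (i : ℕ) = (j : ℕ) + 1 ∧
      (A : Matrix (Fin n) (Fin n) K) = 1 + Matrix.single i j α} = UTaux.gS n K := rfl
  rw [hset]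
  apply le_antisymm
  · rw [Subgroup.closure_le]
    rintro A ⟨i, j, α, hij, hval⟩
    have hji : j < i := by
      rw [Fin.lt_def]; omega
    have : A = UTaux.Tu i j (Fin.ne_of_lt hji) α := Units.ext hval
    rw [this]
    exact UTaux.Tu_mem_UT hji α
  · intro A hA
    exact UTaux.mem_closure_of_mem_UT (UTaux.supp (A : Matrix (Fin n) (Fin n) K)).card A hA le_rfl
end

section
/- For n ≥ 3 and 3 ≤ k ≤ n, the quotient Γ_{n,k}/Z(Γ_{n,k}) of Γ_{n,k} = UT_n(K)/γ_k(UT_n(K)) by its center is isomorphic to Γ_{n,k−1} = UT_n(K)/γ_{k−1}(UT_n(K)). -/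
open Matrix
open scoped commutatorElement

namespace UTaux

variable {n : ℕ} {K : Type*} [CommRing K]

/-- entries vanish in the band `0 < i - j ≤ d` and above the diagonal. -/
def Pat (d : ℕ) (A : Matrix (Fin n) (Fin n) K) : Prop :=
  ∀ i j : Fin n, i ≠ j → (i : ℕ) < (j : ℕ) + d + 1 → A i j = 0

/-- all entries vanish for `i - j < c`. -/
def Bd (c : ℕ) (X : Matrix (Fin n) (Fin n) K) : Prop :=
  ∀ i j : Fin n, (i : ℕ) < (j : ℕ) + c → X i j = 0

lemma Pat.mono {d d' : ℕ} (h : d' ≤ d) {A : Matrix (Fin n) (Fin n) K} (hA : Pat d A) :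
    Pat d' A := fun i j hij hlt => hA i j hij (by omega)

lemma Pat.mul {d : ℕ} {A B : Matrix (Fin n) (Fin n) K} (hA : Pat d A) (hB : Pat d B) :
    Pat d (A * B) := by
  intro i j hij hlt
  rw [Matrix.mul_apply]
  apply Finset.sum_eq_zero
  intro l _
  rcases eq_or_ne l i with rfl | hli
  · rw [hB l j hij hlt, mul_zero]
  rcases eq_or_ne l j with rfl | hlj
  · rw [hA i l hij hlt, zero_mul]
  by_cases h1 : (i : ℕ) < (l : ℕ) + d + 1
  · rw [hA i l (Ne.symm hli) h1, zero_mul]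
  · rw [hB l j hlj (by omega), mul_zero]

lemma Bd.mono {c c' : ℕ} (h : c' ≤ c) {X : Matrix (Fin n) (Fin n) K} (hX : Bd c X) :
    Bd c' X := fun i j hlt => hX i j (by omega)

lemma Bd.mul {c c' : ℕ} {X Y : Matrix (Fin n) (Fin n) K} (hX : Bd c X) (hY : Bd c' Y) :
    Bd (c + c') (X * Y) := by
  intro i j hlt
  rw [Matrix.mul_apply]
  apply Finset.sum_eq_zero
  intro l _
  by_cases h1 : (i : ℕ) < (l : ℕ) + c
  · rw [hX i l h1, zero_mul]
  · rw [hY l j (by omega), mul_zero]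

lemma Bd.add {c : ℕ} {X Y : Matrix (Fin n) (Fin n) K} (hX : Bd c X) (hY : Bd c Y) :
    Bd c (X + Y) := fun i j h => by
  simp [Matrix.add_apply, hX i j h, hY i j h]

lemma Bd.sub {c : ℕ} {X Y : Matrix (Fin n) (Fin n) K} (hX : Bd c X) (hY : Bd c Y) :
    Bd c (X - Y) := fun i j h => by
  simp [Matrix.sub_apply, hX i j h, hY i j h]

lemma pat_zero_of_lowerUni {A : Matrix (Fin n) (Fin n) K} (hA : IsLowerUni A) : Pat 0 A := by
  intro i j hij hlt
  have : (i : ℕ) < (j : ℕ) := by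
    rcases lt_or_eq_of_le (Nat.lt_succ_iff.mp (by omega : (i:ℕ) < (j:ℕ) + 1)) with h | h
    · exact h
    · exact absurd (Fin.ext h) hij
  exact hA.2 i j this

lemma pat_diag_bd {d : ℕ} {A : Matrix (Fin n) (Fin n) K} (hA : Pat d A)
    (hdiag : ∀ i, A i i = 1) : Bd (d + 1) (A - 1) := by
  intro i j hlt
  rcases eq_or_ne i j with rfl | hij
  · simp [Matrix.sub_apply, hdiag i]
  · simp [Matrix.sub_apply, hA i j hij (by omega), Matrix.one_apply_ne hij]

lemma bd_pat {d : ℕ} {X : Matrix (Fin n) (Fin n) K} (hX : Bd (d + 1) X) :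
    Pat d ((1 : Matrix (Fin n) (Fin n) K) + X) := by
  intro i j hij hlt
  simp [Matrix.add_apply, Matrix.one_apply_ne hij, hX i j (by omega)]

variable (n K) in
/-- matrix entries of an element of `UT n K`. -/
def mval (A : ↥(UT n K)) : Matrix (Fin n) (Fin n) K :=
  ((A : (Matrix (Fin n) (Fin n) K)ˣ) : Matrix (Fin n) (Fin n) K)

@[simp] lemma mval_mul (A B : ↥(UT n K)) : mval n K (A * B) = mval n K A * mval n K B := rfl

@[simp] lemma mval_one : mval n K 1 = (1 : Matrix (Fin n) (Fin n) K) := rfl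

lemma mval_lowerUni (A : ↥(UT n K)) : IsLowerUni (mval n K A) := A.2.1

lemma mval_mul_inv (A : ↥(UT n K)) : mval n K A * mval n K A⁻¹ = 1 := by
  rw [← mval_mul, mul_inv_cancel, mval_one]

lemma mval_inv_mul (A : ↥(UT n K)) : mval n K A⁻¹ * mval n K A = 1 := by
  rw [← mval_mul, inv_mul_cancel, mval_one]

variable (n K) in
/-- The subgroup of `UT n K` of matrices vanishing in the band `0 < i - j ≤ d`. -/
def S (d : ℕ) : Subgroup ↥(UT n K) where
  carrier := {A | Pat d (mval n K A) ∧ Pat d (mval n K A⁻¹)}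
  one_mem' := by
    constructor <;> · simp only [inv_one, mval_one]
                      intro i j hij _; exact Matrix.one_apply_ne hij
  mul_mem' := by
    intro a b ha hb
    constructor
    · rw [mval_mul]; exact ha.1.mul hb.1
    · rw [(by exact _root_.mul_inv_rev a b : (a * b)⁻¹ = b⁻¹ * a⁻¹), mval_mul]
      exact hb.2.mul ha.2
  inv_mem' := by
    intro a ha
    refine ⟨ha.2, ?_⟩
    rw [inv_inv]; exact ha.1

lemma mem_S {d : ℕ} {A : ↥(UT n K)} :
    A ∈ S n K d ↔ Pat d (mval n K A) ∧ Pat d (mval n K A⁻¹) := Iff.rfl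

lemma S_mono {d d' : ℕ} (h : d' ≤ d) : S n K d ≤ S n K d' := by
  intro A hA
  exact ⟨hA.1.mono h, hA.2.mono h⟩

lemma mem_S_top (A : ↥(UT n K)) : A ∈ S n K 0 :=
  ⟨pat_zero_of_lowerUni (mval_lowerUni A), pat_zero_of_lowerUni (mval_lowerUni A⁻¹)⟩

lemma comm_pat {a b : ℕ} (A B : ↥(UT n K)) (hA : Pat a (mval n K A)) (hB : Pat b (mval n K B)) :
    Pat (a + b + 1) (mval n K ⁅A, B⁆) := by
  have hN : Bd (a + 1) (mval n K A - 1) := pat_diag_bd hA (mval_lowerUni A).1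
  have hM : Bd (b + 1) (mval n K B - 1) := pat_diag_bd hB (mval_lowerUni B).1
  have hP : Bd 1 (mval n K (B * A)⁻¹ - 1) :=
    pat_diag_bd (pat_zero_of_lowerUni (mval_lowerUni (B * A)⁻¹)) (mval_lowerUni (B * A)⁻¹).1
  have key : mval n K ⁅A, B⁆ = 1 +
      ((mval n K A * mval n K B - mval n K B * mval n K A) * mval n K (B * A)⁻¹) := by
    have h1 : ⁅A, B⁆ = (A * B) * (B * A)⁻¹ := by group
    have h2 : mval n K (B * A) * mval n K (B * A)⁻¹ = 1 := mval_mul_inv _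
    rw [mval_mul] at h2
    rw [h1, mval_mul, mval_mul, sub_mul, h2]
    abel
  rw [key]
  apply bd_pat
  have hdiff : Bd (a + b + 2) (mval n K A * mval n K B - mval n K B * mval n K A) := by
    have : mval n K A * mval n K B - mval n K B * mval n K A =
        (mval n K A - 1) * (mval n K B - 1) - (mval n K B - 1) * (mval n K A - 1) := by
      noncomm_ring
    rw [this]
    have h1 : Bd (a + b + 2) ((mval n K A - 1) * (mval n K B - 1)) := by
      have := hN.mul hM; simpa [Nat.add_assoc, Nat.add_comm, Nat.add_left_comm] using this
    have h2 : Bd (a + b + 2) ((mval n K B - 1) * (mval n K A - 1)) := by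
      have := hM.mul hN; simpa [Nat.add_assoc, Nat.add_comm, Nat.add_left_comm] using this
    exact h1.sub h2
  have : mval n K (B * A)⁻¹ = 1 + (mval n K (B * A)⁻¹ - 1) := by abel
  rw [this, mul_add, mul_one]
  apply hdiff.add
  have := hdiff.mul hP
  exact this.mono (by omega)

lemma lcs_le_S : ∀ m : ℕ, (⊤ : Subgroup ↥(UT n K)).lowerCentralSeries m ≤ S n K m := by
  intro m
  induction m with
  | zero => intro A _; exact mem_S_top A
  | succ m ih =>
    show ⁅(⊤ : Subgroup ↥(UT n K)).lowerCentralSeries m, ⊤⁆ ≤ S n K (m + 1)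
    rw [Subgroup.commutator_le]
    intro g hg h _
    have hgS := ih hg
    constructor
    · have := comm_pat g h hgS.1 (pat_zero_of_lowerUni (mval_lowerUni h))
      simpa using this
    · rw [← commutatorElement_inv]
      have := comm_pat h g (pat_zero_of_lowerUni (mval_lowerUni h)) hgS.1
      simpa using this

/-- The elementary unitriangular matrix `1 + c E_{ij}`. -/
def elM (i j : Fin n) (c : K) : Matrix (Fin n) (Fin n) K :=
  1 + Matrix.single i j c

lemma elM_mul_elM_of_ne {i j i' j' : Fin n} (hij : i ≠ j) (hij' : i' ≠ j') (hji' : j ≠ i')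
    (c c' : K) : elM i j c * elM i' j' c' = 1 + Matrix.single i j c + Matrix.single i' j' c' := by
  have z : Matrix.single i j c * Matrix.single i' j' c' = 0 :=
    single_mul_single_of_ne _ _ _ _ hji' _
  simp only [elM, add_mul, mul_add, one_mul, mul_one, z, add_zero]
  try abel

lemma elM_lowerUni {i j : Fin n} (h : (j : ℕ) < (i : ℕ)) (c : K) : IsLowerUni (elM i j c) := by
  have hij : i ≠ j := by intro e; rw [e] at h; omega
  constructor
  · intro p
    rw [elM, Matrix.add_apply, Matrix.one_apply_eq,
      Matrix.single_apply_of_ne (h := fun hc => hij (hc.1.trans hc.2.symm)), add_zero]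
  · intro p q hpq
    have : ¬(i = p ∧ j = q) := by
      rintro ⟨rfl, rfl⟩
      exact absurd (Fin.lt_iff_val_lt_val.mp hpq) (by omega)
    simp [elM, Matrix.add_apply, Matrix.one_apply_ne (Fin.ne_of_lt hpq),
      Matrix.single_apply_of_ne (h := this)]

lemma elM_mul_elM_neg {i j : Fin n} (hij : i ≠ j) (c : K) :
    elM i j c * elM i j (-c) = 1 := by
  rw [elM_mul_elM_of_ne hij hij (Ne.symm hij)]
  rw [add_assoc, ← Matrix.single_add]
  simp

/-- The elementary matrix as an element of `UT n K`. -/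
def elU (i j : Fin n) (h : (j : ℕ) < (i : ℕ)) (c : K) : ↥(UT n K) :=
  ⟨⟨elM i j c, elM i j (-c),
    elM_mul_elM_neg (by intro e; rw [e] at h; omega) c,
    by simpa using elM_mul_elM_neg (by intro e; rw [e] at h; omega) (-c)⟩,
   ⟨elM_lowerUni h c, elM_lowerUni h (-c)⟩⟩

@[simp] lemma mval_elU {i j : Fin n} (h : (j : ℕ) < (i : ℕ)) (c : K) :
    mval n K (elU i j h c) = elM i j c := rfl

@[simp] lemma mval_elU_inv {i j : Fin n} (h : (j : ℕ) < (i : ℕ)) (c : K) :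
    mval n K (elU i j h c)⁻¹ = elM i j (-c) := rfl

lemma pat_elM {i j : Fin n} {d : ℕ} (h : (j : ℕ) + d < (i : ℕ)) (c : K) :
    Pat d (elM i j c) := by
  intro p q hpq hlt
  have : ¬(i = p ∧ j = q) := by rintro ⟨rfl, rfl⟩; omega
  simp [elM, Matrix.add_apply, Matrix.one_apply_ne hpq, Matrix.single_apply_of_ne (h := this)]

lemma elU_mem_S {i j : Fin n} {d : ℕ} (h : (j : ℕ) < (i : ℕ)) (hd : (j : ℕ) + d < (i : ℕ))
    (c : K) : elU i j h c ∈ S n K d :=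
  ⟨by rw [mval_elU]; exact pat_elM hd c, by rw [mval_elU_inv]; exact pat_elM hd (-c)⟩

lemma elU_commutator (i l j : Fin n) (hjl : (j : ℕ) < (l : ℕ)) (hli : (l : ℕ) < (i : ℕ))
    (c : K) :
    ⁅elU i l hli c, elU l j hjl 1⁆ = elU i j (hjl.trans hli) c := by
  have hil : l ≠ i := by intro e; rw [e] at hli; omega
  have hjl' : j ≠ l := by intro e; rw [e] at hjl; omega
  have hji : j ≠ i := by intro e; rw [e] at hjl; omega
  apply Subtype.ext
  apply Units.ext
  show elM i l c * elM l j 1 * elM i l (-c) * elM l j (-1) = elM i j c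
  unfold elM
  have e : ∀ a b : K, Matrix.single i l a * Matrix.single l j b = Matrix.single i j (a * b) :=
    fun a b => single_mul_single_same _ _ _ _ _
  have z1 : ∀ a b : K, Matrix.single i l a * Matrix.single i l b = 0 :=
    fun a b => single_mul_single_of_ne _ _ _ _ hil _
  have z2 : ∀ a b : K, Matrix.single l j a * Matrix.single l j b = 0 :=
    fun a b => single_mul_single_of_ne _ _ _ _ hjl' _
  have z3 : ∀ a b : K, Matrix.single l j a * Matrix.single i l b = 0 :=
    fun a b => single_mul_single_of_ne _ _ _ _ hji _
  have z4 : ∀ a b : K, Matrix.single i j a * Matrix.single i l b = 0 :=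
    fun a b => single_mul_single_of_ne _ _ _ _ hji _
  have z5 : ∀ a b : K, Matrix.single i j a * Matrix.single l j b = 0 :=
    fun a b => single_mul_single_of_ne _ _ _ _ hjl' _
  have z6 : ∀ a b : K, Matrix.single l j a * Matrix.single i j b = 0 :=
    fun a b => single_mul_single_of_ne _ _ _ _ hji _
  have z7 : ∀ a b : K, Matrix.single i j a * Matrix.single i j b = 0 :=
    fun a b => single_mul_single_of_ne _ _ _ _ hji _
  have z8 : ∀ a b : K, Matrix.single i l a * Matrix.single i j b = 0 :=
    fun a b => single_mul_single_of_ne _ _ _ _ hil _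
  simp only [add_mul, mul_add, one_mul, mul_one, mul_assoc, e, z1, z2, z3, z4, z5, z6, z7, z8,
    add_zero, zero_add, mul_zero, zero_mul]
  ext p q
  simp only [Matrix.add_apply, Matrix.single, Matrix.of_apply, Matrix.one_apply]
  split_ifs <;> ring

lemma add_on_subdiag {m : ℕ} {A B : ↥(UT n K)} (hA : A ∈ S n K m) (hB : B ∈ S n K m)
    {i j : Fin n} (hij : (i : ℕ) = (j : ℕ) + m + 1) :
    mval n K (A * B) i j = mval n K A i j + mval n K B i j := by
  have hne : i ≠ j := by intro e; rw [e] at hij; omega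
  rw [mval_mul, Matrix.mul_apply]
  rw [← Finset.sum_subset (Finset.subset_univ {i, j})]
  · rw [Finset.sum_pair hne, (mval_lowerUni A).1 i, (mval_lowerUni B).1 j, one_mul, mul_one]
    exact add_comm _ _
  · intro l _ hl
    simp only [Finset.mem_insert, Finset.mem_singleton] at hl
    push_neg at hl
    obtain ⟨hli, hlj⟩ := hl
    by_cases h1 : (i : ℕ) < (l : ℕ) + m + 1
    · rw [hA.1 i l (Ne.symm hli) h1, zero_mul]
    · have : (l : ℕ) < (j : ℕ) + m + 1 := by omega
      rw [hB.1 l j hlj this, mul_zero]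

lemma inv_on_subdiag {m : ℕ} {A : ↥(UT n K)} (hA : A ∈ S n K m)
    {i j : Fin n} (hij : (i : ℕ) = (j : ℕ) + m + 1) :
    mval n K A⁻¹ i j = - mval n K A i j := by
  have hne : i ≠ j := by intro e; rw [e] at hij; omega
  have h2 := add_on_subdiag (Subgroup.inv_mem _ hA) hA hij
  rw [inv_mul_cancel, mval_one, Matrix.one_apply_ne hne] at h2
  exact eq_neg_of_add_eq_zero_left h2.symm

lemma mem_S_succ {m : ℕ} {A : ↥(UT n K)} (hA : A ∈ S n K m)
    (hz : ∀ i j : Fin n, (i : ℕ) = (j : ℕ) + m + 1 → mval n K A i j = 0) :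
    A ∈ S n K (m + 1) := by
  constructor
  · intro i j hne hlt
    by_cases h1 : (i : ℕ) < (j : ℕ) + m + 1
    · exact hA.1 i j hne h1
    · exact hz i j (by omega)
  · intro i j hne hlt
    by_cases h1 : (i : ℕ) < (j : ℕ) + m + 1
    · exact hA.2 i j hne h1
    · have hij : (i : ℕ) = (j : ℕ) + m + 1 := by omega
      rw [inv_on_subdiag hA hij, hz i j hij, neg_zero]

/-- Any element of `S m` lies in a subgroup containing `S (m+1)` and the elementary
matrices on the `(m+1)`-st subdiagonal. -/
lemma peel_aux (H : Subgroup ↥(UT n K)) (m : ℕ) (hS : S n K (m + 1) ≤ H)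
    (hel : ∀ (i j : Fin n) (h : (j : ℕ) < (i : ℕ)) (c : K), (i : ℕ) = (j : ℕ) + m + 1 →
      elU i j h c ∈ H) :
    S n K m ≤ H := by
  have aux : ∀ (t : ℕ) (A : ↥(UT n K)), A ∈ S n K m →
      (∀ i j : Fin n, (i : ℕ) = (j : ℕ) + m + 1 → t ≤ (j : ℕ) → mval n K A i j = 0) →
      A ∈ H := by
    intro t
    induction t with
    | zero =>
      intro A hA hz
      exact hS (mem_S_succ hA (fun i j hij => hz i j hij (Nat.zero_le _)))
    | succ t ih =>
      intro A hA hz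
      by_cases hpos : t + m + 1 < n
      · set i₀ : Fin n := ⟨t + m + 1, hpos⟩
        set j₀ : Fin n := ⟨t, by omega⟩
        have hj₀i₀ : (j₀ : ℕ) < (i₀ : ℕ) := by show t < t + m + 1; omega
        set c : K := mval n K A i₀ j₀ with hc
        set F : ↥(UT n K) := elU i₀ j₀ hj₀i₀ c with hF
        have hFH : F ∈ H := hel i₀ j₀ hj₀i₀ c (by show t + m + 1 = t + m + 1; rfl)
        have hFS : F ∈ S n K m := elU_mem_S hj₀i₀ (by show t + m < t + m + 1; omega) c
        have hrest : F⁻¹ * A ∈ H := by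
          apply ih (F⁻¹ * A) (Subgroup.mul_mem _ (Subgroup.inv_mem _ hFS) hA)
          intro i j hij hjt
          rw [add_on_subdiag (Subgroup.inv_mem _ hFS) hA hij]
          rcases eq_or_ne (i, j) (i₀, j₀) with he | hne
          · have h1 : i = i₀ := by rw [Prod.ext_iff] at he; exact he.1
            have h2 : j = j₀ := by rw [Prod.ext_iff] at he; exact he.2
            subst h1; subst h2
            rw [show mval n K F⁻¹ = elM i₀ j₀ (-c) from rfl]
            rw [show elM i₀ j₀ (-c) i₀ j₀ = -c by
              rw [elM, Matrix.add_apply,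
                Matrix.one_apply_ne (by intro e; rw [e] at hj₀i₀; omega : i₀ ≠ j₀),
                Matrix.single_apply_same, zero_add]]
            rw [← hc]; ring
          · have hne2 : ¬(i₀ = i ∧ j₀ = j) := by
              rintro ⟨e1, e2⟩; exact hne (by rw [e1, e2])
            have hzA : mval n K A i j = 0 := by
              apply hz i j hij
              -- j ≠ j₀ forces t + 1 ≤ j
              have : (j : ℕ) ≠ t := by
                intro e
                apply hne2
                have hjj : j = j₀ := Fin.ext (by show (j : ℕ) = t; omega)
                have hii : i = i₀ := Fin.ext (by show (i : ℕ) = t + m + 1; omega)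
                exact ⟨hii.symm, hjj.symm⟩
              omega
            rw [hzA, show mval n K F⁻¹ = elM i₀ j₀ (-c) from rfl]
            rw [elM, Matrix.add_apply,
              Matrix.one_apply_ne (by intro e; rw [e] at hij; omega : i ≠ j),
              Matrix.single_apply_of_ne (h := hne2)]
            ring
        have : A = F * (F⁻¹ * A) := by rw [mul_inv_cancel_left]
        rw [this]
        exact Subgroup.mul_mem _ hFH hrest
      · -- no position with j = t exists on the subdiagonal
        exact ih A hA (fun i j hij hjt => absurd i.isLt (by omega))
  intro A hA
  exact aux n A hA (fun i j hij hjn => absurd (i.isLt) (by omega))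

lemma eq_one_of_mem_S_big {m : ℕ} (hnm : n ≤ m) {A : ↥(UT n K)} (hA : A ∈ S n K m) :
    A = 1 := by
  apply Subtype.ext
  apply Units.ext
  show mval n K A = 1
  ext i j
  rcases eq_or_ne i j with rfl | hne
  · rw [(mval_lowerUni A).1 i, Matrix.one_apply_eq]
  · rw [hA.1 i j hne (by have := i.isLt; omega), Matrix.one_apply_ne hne]

lemma S_le_lcs : ∀ m : ℕ, S n K m ≤ (⊤ : Subgroup ↥(UT n K)).lowerCentralSeries m := by
  intro m
  induction m with
  | zero => intro A _; exact Subgroup.mem_top A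
  | succ m ih =>
    have aux2 : ∀ (t m' : ℕ), m + 1 ≤ m' → n ≤ m' + t →
        S n K m' ≤ (⊤ : Subgroup ↥(UT n K)).lowerCentralSeries (m + 1) := by
      intro t
      induction t with
      | zero =>
        intro m' _ hnm' A hA
        rw [eq_one_of_mem_S_big (by omega) hA]
        exact Subgroup.one_mem _
      | succ t iht =>
        intro m' hm' hnm'
        apply peel_aux _ m'
        · exact iht (m' + 1) (by omega) (by omega)
        · intro i j h c hij
          have hjn : (j : ℕ) + 1 < n := by have := i.isLt; omega
          set l : Fin n := ⟨(j : ℕ) + 1, hjn⟩ with hl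
          have hjl : (j : ℕ) < (l : ℕ) := by show (j : ℕ) < (j : ℕ) + 1; omega
          have hli : (l : ℕ) < (i : ℕ) := by show (j : ℕ) + 1 < (i : ℕ); omega
          have hcomm := elU_commutator i l j hjl hli c
          have hmem1 : elU i l hli c ∈ (⊤ : Subgroup ↥(UT n K)).lowerCentralSeries m :=
            ih (elU_mem_S hli (by show (j : ℕ) + 1 + m < (i : ℕ); omega) c)
          have : elU i j (hjl.trans hli) c ∈ ⁅(⊤ : Subgroup ↥(UT n K)).lowerCentralSeries m,
              (⊤ : Subgroup ↥(UT n K))⁆ := by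
            rw [← hcomm]
            exact Subgroup.commutator_mem_commutator hmem1 (Subgroup.mem_top _)
          exact this
    exact aux2 n (m + 1) le_rfl (by omega)

lemma center_pat {m : ℕ} (hm : 1 ≤ m) (hmn : m + 2 ≤ n) (g : ↥(UT n K))
    (hg : ∀ h : ↥(UT n K), ⁅g, h⁆ ∈ S n K (m + 1)) :
    Pat m (mval n K g) := by
  -- g commutes with everything within the band of width m + 2
  have key : ∀ (h : ↥(UT n K)) (p q : Fin n), (p : ℕ) < (q : ℕ) + (m + 2) →
      (mval n K g * mval n K h) p q = (mval n K h * mval n K g) p q := by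
    intro h p q hpq
    have hc := (hg h).1
    have hmul : mval n K g * mval n K h = mval n K ⁅g, h⁆ * (mval n K h * mval n K g) := by
      have e : g * h = ⁅g, h⁆ * (h * g) := by group
      calc mval n K g * mval n K h = mval n K (g * h) := (mval_mul g h).symm
        _ = mval n K (⁅g, h⁆ * (h * g)) := by rw [← e]
        _ = mval n K ⁅g, h⁆ * (mval n K h * mval n K g) := by rw [mval_mul, mval_mul]
    rw [hmul, Matrix.mul_apply, Finset.sum_eq_single p]
    · rw [(mval_lowerUni ⁅g, h⁆).1 p, one_mul, ← mval_mul]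
    · intro l _ hlp
      by_cases h1 : (p : ℕ) < (l : ℕ) + (m + 1) + 1
      · rw [hc p l (Ne.symm hlp) h1, zero_mul]
      · have hlq : (l : ℕ) < (q : ℕ) := by omega
        rw [← mval_mul, (mval_lowerUni (h * g)).2 l q (Fin.lt_iff_val_lt_val.mpr hlq), mul_zero]
    · intro hp; exact absurd (Finset.mem_univ p) hp
  intro i j hne hlt
  rcases lt_trichotomy (i : ℕ) (j : ℕ) with hlt2 | heq | hgt
  · exact (mval_lowerUni g).2 i j (Fin.lt_iff_val_lt_val.mpr hlt2)
  · exact absurd (Fin.ext heq) hne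
  · by_cases hj : 0 < (j : ℕ)
    · -- use h = elU j (j-1) 1
      set j' : Fin n := ⟨(j : ℕ) - 1, by have := j.isLt; omega⟩ with hj'
      have hj'j : (j' : ℕ) < (j : ℕ) := by show (j : ℕ) - 1 < (j : ℕ); omega
      have hkey := key (elU j j' hj'j 1) i j' (by show (i : ℕ) < (j : ℕ) - 1 + (m + 2); omega)
      rw [show mval n K (elU j j' hj'j 1) = 1 + Matrix.single j j' (1 : K) from rfl] at hkey
      rw [mul_add, add_mul, mul_one, one_mul, Matrix.add_apply, Matrix.add_apply] at hkey
      rw [Matrix.mul_single_apply_same, mul_one] at hkey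
      rw [Matrix.single_mul_apply_of_ne (h := hne)] at hkey
      · -- hkey : g i j' + g i j = g i j' + 0
        have := hkey
        rw [add_zero] at this
        exact add_left_cancel (a := mval n K g i j') (by rw [this, add_zero])
    · -- j = 0 : use h = elU (i+1) i 1
      have hj0 : (j : ℕ) = 0 := by omega
      have hi1 : (i : ℕ) + 1 < n := by omega
      set i' : Fin n := ⟨(i : ℕ) + 1, hi1⟩ with hi'
      have hii' : (i : ℕ) < (i' : ℕ) := by show (i : ℕ) < (i : ℕ) + 1; omega
      have hkey := key (elU i' i hii' 1) i' j (by show (i : ℕ) + 1 < (j : ℕ) + (m + 2); omega)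
      rw [show mval n K (elU i' i hii' 1) = 1 + Matrix.single i' i (1 : K) from rfl] at hkey
      rw [mul_add, add_mul, mul_one, one_mul, Matrix.add_apply, Matrix.add_apply] at hkey
      rw [Matrix.mul_single_apply_of_ne
        (hbj := fun e => hne (by rw [e]))] at hkey
      rw [Matrix.single_mul_apply_same, one_mul] at hkey
      rw [add_zero] at hkey
      exact (add_left_cancel (a := mval n K g i' j)
        (by rw [← hkey, add_zero])).symm

end UTaux

open UTaux

/-- `Γ_{n,k} = UT_n(K)/γ_k(UT_n(K))`; here `γ_k` (`1`-based, `γ_1(G) = G`) is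
`lowerCentralSeries _ (k-1)` in Mathlib's `0`-based indexing. -/
def Gamma (n k : ℕ) (K : Type*) [CommRing K] :=
  UT n K ⧸ Subgroup.lowerCentralSeries (⊤ : Subgroup (UT n K)) (k - 1)

instance (n k : ℕ) (K : Type*) [CommRing K] : Group (Gamma n k K) :=
  QuotientGroup.Quotient.group _

/-- For `n ≥ 3` and `3 ≤ k ≤ n`, the quotient of
`Γ_{n,k} = UT_n(K)/γ_k(UT_n(K))` by its center is isomorphic to `Γ_{n,k-1}`. -/
theorem Gamma_quotient_center (n k : ℕ) (K : Type*) [Field K]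
    (hn : 3 ≤ n) (hk3 : 3 ≤ k) (hkn : k ≤ n) :
    Nonempty ((Gamma n k K ⧸ Subgroup.center (Gamma n k K)) ≃* Gamma n (k - 1) K) := by
  obtain ⟨m, rfl⟩ : ∃ m, k = m + 2 := ⟨k - 2, by omega⟩
  have hm : 1 ≤ m := by omega
  have hmn : m + 2 ≤ n := hkn
  set G := ↥(UT n K)
  set N := (⊤ : Subgroup G).lowerCentralSeries (m + 1) with hN
  set M := (⊤ : Subgroup G).lowerCentralSeries m with hM
  have hNM : N ≤ M := Subgroup.lowerCentralSeries_antitone _ (by omega)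
  -- the preimage of the center is γ_{k-1}
  have key : ∀ y : G, (QuotientGroup.mk' N) y ∈ Subgroup.center (G ⧸ N) →
      ∀ h : G, ⁅y, h⁆ ∈ N := by
    intro y hy h
    have h1 : (QuotientGroup.mk' N) ⁅y, h⁆ = 1 := by
      rw [map_commutatorElement, commutatorElement_eq_one_iff_mul_comm]
      exact (Subgroup.mem_center_iff.mp hy _).symm
    have h2 : ⁅y, h⁆ ∈ (QuotientGroup.mk' N).ker := h1
    rwa [QuotientGroup.ker_mk'] at h2
  have hcent : Subgroup.center (G ⧸ N) = Subgroup.map (QuotientGroup.mk' N) M := by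
    ext x
    constructor
    · intro hx
      obtain ⟨g, rfl⟩ := QuotientGroup.mk'_surjective N x
      have hcom : ∀ h : G, ⁅g, h⁆ ∈ N := key g hx
      have hcom' : ∀ h : G, ⁅g⁻¹, h⁆ ∈ N := by
        apply key g⁻¹
        rw [map_inv]
        exact Subgroup.inv_mem _ hx
      have hgS : g ∈ S n K m := by
        refine ⟨center_pat hm hmn g (fun h => lcs_le_S (m + 1) (hcom h)), ?_⟩
        exact center_pat hm hmn g⁻¹ (fun h => lcs_le_S (m + 1) (hcom' h))
      exact ⟨g, S_le_lcs m hgS, rfl⟩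
    · rintro ⟨g, hg, rfl⟩
      rw [Subgroup.mem_center_iff]
      intro y
      obtain ⟨h, rfl⟩ := QuotientGroup.mk'_surjective N y
      rw [← _root_.map_mul, ← _root_.map_mul]
      show (QuotientGroup.mk (h * g) : G ⧸ N) = QuotientGroup.mk (g * h)
      rw [QuotientGroup.eq]
      have e : (h * g)⁻¹ * (g * h) = ⁅g⁻¹, h⁻¹⁆ := by
        simp only [commutatorElement_def, _root_.mul_inv_rev, inv_inv, mul_assoc]
        rfl
      rw [e]
      show ⁅g⁻¹, h⁻¹⁆ ∈ ⁅M, (⊤ : Subgroup G)⁆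
      exact Subgroup.commutator_mem_commutator (Subgroup.inv_mem _ hg) (Subgroup.mem_top _)
  exact ⟨(QuotientGroup.quotientMulEquivOfEq hcent).trans
    (QuotientGroup.quotientQuotientEquivQuotient N M hNM)⟩
end

section
/- If K is a prime field (K = F_p or K = Q), n ≥ 3 and 2 ≤ k ≤ n, then every class preserving automorphism of Γ_{n,k} = UT_n(K)/γ_k(UT_n(K)) is inner: Aut_c(Γ_{n,k}) = Inn(Γ_{n,k}). -/
open Matrix

namespace GammaAux
open scoped commutatorElement
variable {n : ℕ} {K : Type*} [Field K]

def Emat (a b : Fin n) (c : K) : Matrix (Fin n) (Fin n) K :=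
  Matrix.of fun i j => if i = a ∧ j = b then c else 0

@[simp] lemma Emat_apply (a b : Fin n) (c : K) (i j : Fin n) :
    Emat a b c i j = if i = a ∧ j = b then c else 0 := rfl

lemma Emat_add (a b : Fin n) (c c' : K) : Emat a b c + Emat a b c' = Emat a b (c + c') := by
  ext i j; by_cases h : i = a ∧ j = b <;> simp [h]

lemma Emat_mul_Emat (a b a' b' : Fin n) (c c' : K) (h : b ≠ a') :
    Emat a b c * Emat a' b' c' = 0 := by
  ext i j
  simp only [Matrix.mul_apply, Emat_apply, Matrix.zero_apply]
  apply Finset.sum_eq_zero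
  intro l _
  by_cases h1 : i = a ∧ l = b
  · by_cases h2 : l = a' ∧ j = b'
    · exact absurd (h1.2 ▸ h2.1) h
    · simp [h2]
  · simp [h1]

lemma Emat_mul_Emat_same (a c b : Fin n) (x y : K) :
    Emat a c x * Emat c b y = Emat a b (x * y) := by
  ext i j
  simp only [Matrix.mul_apply, Emat_apply]
  by_cases h : i = a ∧ j = b
  · rw [Finset.sum_eq_single c]
    · simp [h.1, h.2]
    · intro l _ hl; simp [hl]
    · intro hc; exact absurd (Finset.mem_univ c) hc
  · rw [Finset.sum_eq_zero]
    · simp [h]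
    · intro l _
      by_cases h1 : i = a ∧ l = c
      · by_cases h2 : l = c ∧ j = b
        · exact absurd ⟨h1.1, h2.2⟩ h
        · simp [h2]
      · simp [h1]

lemma mul_Emat_apply (M : Matrix (Fin n) (Fin n) K) (a b : Fin n) (c : K) (i j : Fin n) :
    (M * Emat a b c) i j = if j = b then M i a * c else 0 := by
  simp only [Matrix.mul_apply, Emat_apply]
  by_cases hj : j = b
  · subst hj
    rw [Finset.sum_eq_single a]
    · simp
    · intro l _ hl; simp [hl]
    · intro h; exact absurd (Finset.mem_univ a) h
  · simp only [hj, if_neg]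
    rw [Finset.sum_eq_zero]; · simp [hj]
    intro l _; simp [hj]

lemma Emat_mul_apply (M : Matrix (Fin n) (Fin n) K) (a b : Fin n) (c : K) (i j : Fin n) :
    (Emat a b c * M) i j = if i = a then c * M b j else 0 := by
  simp only [Matrix.mul_apply, Emat_apply]
  by_cases hi : i = a
  · subst hi
    rw [Finset.sum_eq_single b]
    · simp
    · intro l _ hl; simp [hl]
    · intro h; exact absurd (Finset.mem_univ b) h
  · simp only [hi, if_neg]
    rw [Finset.sum_eq_zero]; · simp [hi]
    intro l _; simp [hi]

def Dep (d : ℕ) (M : Matrix (Fin n) (Fin n) K) : Prop :=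
  ∀ i j : Fin n, (i : ℕ) < (j : ℕ) + d → M i j = 0

lemma Dep.mono {d d' : ℕ} {M : Matrix (Fin n) (Fin n) K} (h : Dep d M) (hd : d' ≤ d) :
    Dep d' M := fun i j hij => h i j (lt_of_lt_of_le hij (by omega))

lemma Dep.add {d : ℕ} {M N : Matrix (Fin n) (Fin n) K} (hM : Dep d M) (hN : Dep d N) :
    Dep d (M + N) := fun i j hij => by simp [hM i j hij, hN i j hij]

lemma Dep.sub {d : ℕ} {M N : Matrix (Fin n) (Fin n) K} (hM : Dep d M) (hN : Dep d N) :
    Dep d (M - N) := fun i j hij => by simp [hM i j hij, hN i j hij]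

lemma Dep.neg {d : ℕ} {M : Matrix (Fin n) (Fin n) K} (hM : Dep d M) :
    Dep d (-M) := fun i j hij => by simp [hM i j hij]

lemma Dep.zero (d : ℕ) : Dep d (0 : Matrix (Fin n) (Fin n) K) := fun _ _ _ => rfl

lemma Dep.mul {a b : ℕ} {M N : Matrix (Fin n) (Fin n) K} (hM : Dep a M) (hN : Dep b N) :
    Dep (a + b) (M * N) := by
  intro i j hij
  rw [Matrix.mul_apply]
  apply Finset.sum_eq_zero
  intro l _
  rcases lt_or_ge (l : ℕ) ((j : ℕ) + b) with h | h
  · rw [hN l j h, mul_zero]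
  · rw [hM i l (by omega), zero_mul]

lemma Dep.eq_zero {M : Matrix (Fin n) (Fin n) K} (h : Dep n M) : M = 0 := by
  ext i j
  exact h i j (by omega)

lemma Dep.emat {a b : Fin n} {c : K} {d : ℕ} (h : (b : ℕ) + d ≤ (a : ℕ)) :
    Dep d (Emat a b c) := by
  intro i j hij
  simp only [Emat_apply, ite_eq_right_iff, and_imp]
  rintro rfl rfl
  omega

lemma dep_mul_apply_exact {a b : ℕ} {M N : Matrix (Fin n) (Fin n) K}
    (hM : Dep a M) (hN : Dep b N) (i j : Fin n) (hij : (i : ℕ) = (j : ℕ) + (a + b))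
    (l : Fin n) (hl : (l : ℕ) = (j : ℕ) + b) :
    (M * N) i j = M i l * N l j := by
  rw [Matrix.mul_apply]
  rw [Finset.sum_eq_single l]
  · intro c _ hc
    rcases lt_or_ge (c : ℕ) ((j : ℕ) + b) with h | h
    · rw [hN c j h, mul_zero]
    · rcases lt_or_ge (i : ℕ) ((c : ℕ) + a) with h' | h'
      · rw [hM i c h', zero_mul]
      · exfalso; apply hc; apply Fin.ext; omega
  · intro h; exact absurd (Finset.mem_univ l) h

/-! ## group level -/

lemma isLowerUni_iff_dep {A : Matrix (Fin n) (Fin n) K} :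
    IsLowerUni A ↔ Dep 1 (A - 1) := by
  constructor
  · rintro ⟨h1, h2⟩ i j hij
    rcases eq_or_lt_of_le (Nat.lt_succ_iff.mp hij) with h | h
    · have : i = j := Fin.ext h
      subst this
      simp [h1 i]
    · have hij' : i < j := h
      simp [h2 i j hij', Matrix.one_apply, Fin.ne_of_lt hij']
  · intro h
    constructor
    · intro i
      have := h i i (by omega)
      simpa using sub_eq_zero.mp (by simpa using this)
    · intro i j hij
      have := h i j (by omega)
      rw [Matrix.sub_apply] at this
      rw [Matrix.one_apply_ne (Fin.ne_of_lt hij)] at this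
      simpa using this

variable (n K) in
abbrev UTg := ↥(UT n K)

/-- underlying matrix of an element of `UT n K` -/
def mval (u : UTg n K) : Matrix (Fin n) (Fin n) K :=
  ((u : (Matrix (Fin n) (Fin n) K)ˣ) : Matrix (Fin n) (Fin n) K)

@[simp] lemma mval_one : mval (1 : UTg n K) = 1 := rfl

@[simp] lemma mval_mul (u v : UTg n K) : mval (u * v) = mval u * mval v := rfl

lemma mval_inv_mul (u : UTg n K) : mval u⁻¹ * mval u = 1 := Units.inv_mul u.val

lemma mval_mul_inv (u : UTg n K) : mval u * mval u⁻¹ = 1 := Units.mul_inv u.val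

lemma mval_lowerUni (u : UTg n K) : IsLowerUni (mval u) := u.2.1

lemma mval_inv_lowerUni (u : UTg n K) : IsLowerUni (mval u⁻¹) := u⁻¹.2.1

lemma depM_one (u : UTg n K) : Dep 1 (mval u - 1) := isLowerUni_iff_dep.mp u.2.1

lemma mval_dep0 (u : UTg n K) : Dep 0 (mval u) := by
  intro i j hij
  have hne : i ≠ j := by intro h; subst h; omega
  have h1 := depM_one u i j (by omega)
  rw [Matrix.sub_apply, Matrix.one_apply_ne hne, sub_zero] at h1
  exact h1

lemma mul_sub_one (u v : UTg n K) :
    mval (u * v) - 1 = (mval u - 1) + (mval v - 1) + (mval u - 1) * (mval v - 1) := by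
  rw [mval_mul]; noncomm_ring

lemma inv_sub_one (u : UTg n K) :
    mval u⁻¹ - 1 = -(mval u - 1) - (mval u⁻¹ - 1) * (mval u - 1) := by
  have h := mval_inv_mul u
  have : (mval u⁻¹ - 1) * (mval u - 1) + (mval u⁻¹ - 1) + (mval u - 1) = 0 := by
    have expand : (mval u⁻¹ - 1) * (mval u - 1) + (mval u⁻¹ - 1) + (mval u - 1) =
        mval u⁻¹ * mval u - 1 := by noncomm_ring
    rw [expand, h]; simp
  linear_combination (norm := noncomm_ring) this

def depM (d : ℕ) (u : UTg n K) : Prop := Dep d (mval u - 1)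

lemma depM.one' (u : UTg n K) : depM 1 u := depM_one u

lemma depM.of_le {d d' : ℕ} {u : UTg n K} (h : depM d u) (hd : d' ≤ d) : depM d' u :=
  Dep.mono h hd

lemma depM.mul {d : ℕ} {u v : UTg n K} (hu : depM d u) (hv : depM d v) : depM d (u * v) := by
  unfold depM at *
  rw [mul_sub_one]
  exact (hu.add hv).add ((hu.mul hv).mono (by omega))

lemma depM.inv {d : ℕ} {u : UTg n K} (hu : depM d u) : depM d u⁻¹ := by
  unfold depM at *
  have key : ∀ e, e ≤ d → Dep e (mval u⁻¹ - 1) := by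
    intro e
    induction e with
    | zero => intro _; exact (depM_one u⁻¹).mono (by omega)
    | succ e ih =>
      intro he
      rw [inv_sub_one]
      refine Dep.sub (hu.neg.mono he) ?_
      have h1 : Dep e (mval u⁻¹ - 1) := ih (by omega)
      have h2 : Dep 1 (mval u - 1) := depM_one u
      exact (h1.mul h2).mono (by omega)
  rcases Nat.eq_zero_or_pos d with h | h
  · subst h; exact (depM_one u⁻¹).mono (by omega)
  · exact key d le_rfl

lemma conj_sub_one (g v : UTg n K) :
    mval (g * v * g⁻¹) - 1 = mval g * (mval v - 1) * mval g⁻¹ := by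
  have : mval g * (mval v - 1) * mval g⁻¹ =
      mval g * mval v * mval g⁻¹ - mval g * mval g⁻¹ := by noncomm_ring
  rw [this, mval_mul_inv]
  simp [mval_mul]

lemma depM.conj {d : ℕ} {v : UTg n K} (g : UTg n K) (hv : depM d v) : depM d (g * v * g⁻¹) := by
  unfold depM at *
  rw [conj_sub_one]
  have := ((mval_dep0 g).mul hv).mul (mval_dep0 g⁻¹)
  simpa using this



variable {n : ℕ} {K : Type*} [Field K]

lemma Emat_zero (a b : Fin n) : Emat a b (0 : K) = 0 := by
  ext i j; simp [Emat_apply]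

lemma coord_mul {d : ℕ} (hd : 1 ≤ d) {u v : UTg n K} (hu : depM d u) (hv : depM d v)
    (i j : Fin n) (hij : (i : ℕ) = (j : ℕ) + d) :
    (mval (u * v) - 1) i j = (mval u - 1) i j + (mval v - 1) i j := by
  rw [mul_sub_one]
  rw [Matrix.add_apply, Matrix.add_apply]
  rw [Dep.mul hu hv i j (by omega), add_zero]

lemma coord_inv {d : ℕ} (hd : 1 ≤ d) {u : UTg n K} (hu : depM d u)
    (i j : Fin n) (hij : (i : ℕ) = (j : ℕ) + d) :
    (mval u⁻¹ - 1) i j = -((mval u - 1) i j) := by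
  rw [inv_sub_one u]
  rw [Matrix.sub_apply, Matrix.neg_apply]
  rw [Dep.mul (hu.inv : depM d u⁻¹) (depM_one u) i j (by omega), sub_zero]

lemma coord_conj {d : ℕ} (hd : 1 ≤ d) (g : UTg n K) {v : UTg n K} (hv : depM d v)
    (i j : Fin n) (hij : (i : ℕ) = (j : ℕ) + d) :
    (mval (g * v * g⁻¹) - 1) i j = (mval v - 1) i j := by
  rw [conj_sub_one]
  have expand : mval g * (mval v - 1) * mval g⁻¹ =
      (mval v - 1) + ((mval g - 1) * (mval v - 1) + ((mval v - 1) * (mval g⁻¹ - 1) +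
        (mval g - 1) * (mval v - 1) * (mval g⁻¹ - 1))) := by noncomm_ring
  rw [expand]
  rw [Matrix.add_apply, Matrix.add_apply, Matrix.add_apply]
  rw [Dep.mul (depM_one g) hv i j (by omega)]
  rw [Dep.mul hv (depM_one g⁻¹) i j (by omega)]
  rw [Dep.mul (Dep.mul (depM_one g) hv) (depM_one g⁻¹) i j (by omega)]
  ring

lemma depM_succ_of_coords {d : ℕ} {u : UTg n K} (hu : depM d u)
    (h : ∀ i j : Fin n, (i : ℕ) = (j : ℕ) + d → (mval u - 1) i j = 0) : depM (d + 1) u := by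
  intro i j hij
  rcases lt_or_ge (i : ℕ) ((j : ℕ) + d) with h' | h'
  · exact hu i j h'
  · exact h i j (by omega)

/-! ## transvections -/

lemma tv_inv_aux (a b : Fin n) (hab : (b : ℕ) < (a : ℕ)) (c c' : K) (hcc : c + c' = 0) :
    (1 + Emat a b c) * (1 + Emat a b c') = 1 := by
  have h0 : Emat a b c * Emat a b c' = 0 :=
    Emat_mul_Emat a b a b c c' (fun h => by rw [h] at hab; omega)
  have expand : (1 + Emat a b c) * (1 + Emat a b c') =
      1 + (Emat a b c + Emat a b c') + Emat a b c * Emat a b c' := by noncomm_ring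
  rw [expand, h0, add_zero, Emat_add, hcc, Emat_zero, add_zero]

def tv (a b : Fin n) (hab : (b : ℕ) < (a : ℕ)) (c : K) : UTg n K :=
  ⟨⟨1 + Emat a b c, 1 + Emat a b (-c),
    tv_inv_aux a b hab c (-c) (by ring), tv_inv_aux a b hab (-c) c (by ring)⟩,
   by
    constructor
    · rw [isLowerUni_iff_dep]
      simpa using Dep.emat (a := a) (b := b) (c := c) (d := 1) (by omega)
    · rw [isLowerUni_iff_dep]
      show Dep 1 (1 + Emat a b (-c) - 1)
      simpa using Dep.emat (a := a) (b := b) (c := -c) (d := 1) (by omega)⟩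

@[simp] lemma mval_tv (a b : Fin n) (hab : (b : ℕ) < (a : ℕ)) (c : K) :
    mval (tv a b hab c) = 1 + Emat a b c := rfl

@[simp] lemma mval_tv_inv (a b : Fin n) (hab : (b : ℕ) < (a : ℕ)) (c : K) :
    mval (tv a b hab c)⁻¹ = 1 + Emat a b (-c) := rfl

lemma tv_sub_one (a b : Fin n) (hab : (b : ℕ) < (a : ℕ)) (c : K) :
    mval (tv a b hab c) - 1 = Emat a b c := by
  rw [mval_tv]; abel

lemma tv_inv_sub_one (a b : Fin n) (hab : (b : ℕ) < (a : ℕ)) (c : K) :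
    mval (tv a b hab c)⁻¹ - 1 = Emat a b (-c) := by
  rw [mval_tv_inv]; abel

lemma mval_inj {u v : UTg n K} (h : mval u = mval v) : u = v :=
  Subtype.ext (Units.ext h)

lemma depM_tv {a b : Fin n} {hab : (b : ℕ) < (a : ℕ)} {c : K} {d : ℕ}
    (h : (b : ℕ) + d ≤ (a : ℕ)) : depM d (tv a b hab c) := by
  show Dep d _
  rw [tv_sub_one]
  exact Dep.emat h

lemma tv_mul_same (a b : Fin n) (hab : (b : ℕ) < (a : ℕ)) (c c' : K) :
    tv a b hab c * tv a b hab c' = tv a b hab (c + c') := by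
  apply mval_inj
  rw [mval_mul, mval_tv, mval_tv, mval_tv]
  have h0 : Emat a b c * Emat a b c' = 0 :=
    Emat_mul_Emat a b a b c c' (fun h => by rw [h] at hab; omega)
  have expand : (1 + Emat a b c) * (1 + Emat a b c') =
      1 + (Emat a b c + Emat a b c') + Emat a b c * Emat a b c' := by noncomm_ring
  rw [expand, h0, add_zero, Emat_add]

lemma tv_zero (a b : Fin n) (hab : (b : ℕ) < (a : ℕ)) :
    tv a b hab (0 : K) = 1 := by
  apply mval_inj
  rw [mval_tv, mval_one, Emat_zero, add_zero]

lemma tv_comm (a c b : Fin n) (hca : (c : ℕ) < (a : ℕ)) (hbc : (b : ℕ) < (c : ℕ)) (α β : K) :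
    ⁅tv a c hca α, tv c b hbc β⁆ = tv a b (by omega) (α * β) := by
  have hba : b ≠ a := fun h => by rw [h] at hbc; omega
  have hca' : c ≠ a := fun h => by rw [h] at hca; omega
  have hbc' : b ≠ c := fun h => by rw [h] at hbc; omega
  have e1 : ∀ x y : K, Emat a c x * Emat c b y = Emat a b (x * y) :=
    fun x y => Emat_mul_Emat_same a c b x y
  have e2 : ∀ x y : K, Emat c b x * Emat a c y = 0 :=
    fun x y => Emat_mul_Emat c b a c x y hba
  have e3 : ∀ x y : K, Emat a c x * Emat a c y = 0 :=
    fun x y => Emat_mul_Emat a c a c x y hca'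
  have e4 : ∀ x y : K, Emat c b x * Emat c b y = 0 :=
    fun x y => Emat_mul_Emat c b c b x y hbc'
  have e5 : ∀ x y : K, Emat a b x * Emat a c y = 0 :=
    fun x y => Emat_mul_Emat a b a c x y hba
  have e6 : ∀ x y : K, Emat a b x * Emat c b y = 0 :=
    fun x y => Emat_mul_Emat a b c b x y hbc'
  rw [commutatorElement_def]
  apply mval_inj
  rw [mval_mul, mval_mul, mval_mul, mval_tv, mval_tv, mval_tv_inv, mval_tv_inv, mval_tv]
  have A1 : (1 + Emat a c α) * (1 + Emat c b β) =
      1 + (Emat a c α + Emat c b β + Emat a b (α * β)) := by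
    have expand : (1 + Emat a c α) * (1 + Emat c b β) =
        1 + (Emat a c α + Emat c b β + Emat a c α * Emat c b β) := by noncomm_ring
    rw [expand, e1]
  have A2 : (1 + (Emat a c α + Emat c b β + Emat a b (α * β))) * (1 + Emat a c (-α)) =
      1 + (Emat a c α + Emat c b β + Emat a b (α * β) + Emat a c (-α)) := by
    have expand : (1 + (Emat a c α + Emat c b β + Emat a b (α * β))) * (1 + Emat a c (-α)) =
        1 + (Emat a c α + Emat c b β + Emat a b (α * β) + Emat a c (-α)) +
        (Emat a c α * Emat a c (-α) + Emat c b β * Emat a c (-α) +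
          Emat a b (α * β) * Emat a c (-α)) := by noncomm_ring
    rw [expand, e3, e2, e5, add_zero, add_zero, add_zero]
  have A3 : (1 + (Emat a c α + Emat c b β + Emat a b (α * β) + Emat a c (-α))) *
      (1 + Emat c b (-β)) =
      1 + (Emat a c α + Emat c b β + Emat a b (α * β) + Emat a c (-α) + Emat c b (-β) +
        (Emat a b (α * -β) + Emat a b (-α * -β))) := by
    have expand : (1 + (Emat a c α + Emat c b β + Emat a b (α * β) + Emat a c (-α))) *
        (1 + Emat c b (-β)) =
        1 + (Emat a c α + Emat c b β + Emat a b (α * β) + Emat a c (-α) + Emat c b (-β) +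
        (Emat a c α * Emat c b (-β) + Emat c b β * Emat c b (-β) +
          Emat a b (α * β) * Emat c b (-β) + Emat a c (-α) * Emat c b (-β))) := by noncomm_ring
    rw [expand, e1, e4, e6, e1, add_zero]
    abel
  rw [A1, A2, A3]
  have rearr : Emat a c α + Emat c b β + Emat a b (α * β) + Emat a c (-α) + Emat c b (-β) +
      (Emat a b (α * -β) + Emat a b (-α * -β)) =
      (Emat a c α + Emat a c (-α)) + ((Emat c b β + Emat c b (-β)) +
      ((Emat a b (α * β) + Emat a b (α * -β)) + Emat a b (-α * -β))) := by abel
  rw [rearr, Emat_add, Emat_add, Emat_add]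
  norm_num [Emat_zero]



variable {n : ℕ} {K : Type*} [Field K]

lemma commutator_sub_one (u v : UTg n K) :
    mval ⁅u, v⁆ - 1 = ((mval u - 1) * (mval v - 1) - (mval v - 1) * (mval u - 1)) *
      mval u⁻¹ * mval v⁻¹ := by
  rw [commutatorElement_def]
  rw [show (mval u - 1) * (mval v - 1) - (mval v - 1) * (mval u - 1) =
    mval u * mval v - mval v * mval u from by noncomm_ring]
  rw [sub_mul, sub_mul]
  rw [show mval v * mval u * mval u⁻¹ * mval v⁻¹ =
    mval v * (mval u * mval u⁻¹) * mval v⁻¹ from by noncomm_ring]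
  rw [mval_mul_inv u]
  rw [mul_one, mval_mul_inv v]
  rw [mval_mul, mval_mul, mval_mul]

lemma depM_commutator {a b : ℕ} {u v : UTg n K} (hu : depM a u) (hv : depM b v) :
    depM (a + b) ⁅u, v⁆ := by
  show Dep (a + b) _
  rw [commutator_sub_one]
  have h1 : Dep (a + b) ((mval u - 1) * (mval v - 1) - (mval v - 1) * (mval u - 1)) :=
    (Dep.mul hu hv).sub ((Dep.mul hv hu).mono (by omega))
  have := (h1.mul (mval_dep0 u⁻¹)).mul (mval_dep0 v⁻¹)
  simpa using this

lemma coord_mul_utri {d : ℕ} {X : Matrix (Fin n) (Fin n) K} (hX : Dep d X) (w : UTg n K)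
    (i j : Fin n) (hij : (i : ℕ) = (j : ℕ) + d) :
    (X * mval w) i j = X i j := by
  have expand : X * mval w = X + X * (mval w - 1) := by noncomm_ring
  rw [expand, Matrix.add_apply, Dep.mul hX (depM_one w) i j (by omega), add_zero]

lemma coord_commutator {a b : ℕ} (ha : 1 ≤ a) (hb : 1 ≤ b) {u v : UTg n K}
    (hu : depM a u) (hv : depM b v) (i j : Fin n) (hij : (i : ℕ) = (j : ℕ) + (a + b))
    (l l' : Fin n) (hl : (l : ℕ) = (j : ℕ) + b) (hl' : (l' : ℕ) = (j : ℕ) + a) :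
    (mval ⁅u, v⁆ - 1) i j =
      (mval u - 1) i l * (mval v - 1) l j - (mval v - 1) i l' * (mval u - 1) l' j := by
  rw [commutator_sub_one]
  have h1 : Dep (a + b) ((mval u - 1) * (mval v - 1) - (mval v - 1) * (mval u - 1)) :=
    (Dep.mul hu hv).sub ((Dep.mul hv hu).mono (by omega))
  rw [coord_mul_utri (by simpa using h1.mul (mval_dep0 u⁻¹)) v⁻¹ i j hij]
  rw [coord_mul_utri h1 u⁻¹ i j hij]
  rw [Matrix.sub_apply]
  rw [dep_mul_apply_exact hu hv i j hij l hl]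
  rw [dep_mul_apply_exact hv hu i j (by omega) l' hl']

def Tsub (d : ℕ) : Subgroup (UTg n K) where
  carrier := {u | depM d u}
  one_mem' := by show Dep d _; simpa using Dep.zero d
  mul_mem' := fun ha hb => depM.mul ha hb
  inv_mem' := fun ha => depM.inv ha

lemma mem_Tsub {d : ℕ} {u : UTg n K} : u ∈ Tsub d ↔ depM d u := Iff.rfl

lemma lcs_le_Tsub (m : ℕ) : Subgroup.lowerCentralSeries (⊤ : Subgroup (UTg n K)) m ≤ Tsub (m + 1) := by
  induction m with
  | zero => intro u _; exact depM.one' u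
  | succ m ih =>
    refine le_trans (le_of_eq (Subgroup.lowerCentralSeries_succ ⊤ m)) (Subgroup.commutator_le.mpr ?_)
    intro p hp q _
    have := depM_commutator (ih hp) (depM.one' q)
    exact this.of_le (by omega)

lemma tv_mem_lcs : ∀ (m : ℕ) (a b : Fin n) (hab : (b : ℕ) < (a : ℕ)) (α : K),
    (b : ℕ) + m + 1 ≤ (a : ℕ) → tv a b hab α ∈ Subgroup.lowerCentralSeries (⊤ : Subgroup (UTg n K)) m := by
  intro m
  induction m with
  | zero => intro a b hab α _; rw [Subgroup.lowerCentralSeries_zero]; trivial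
  | succ m ih =>
    intro a b hab α h
    have hbn : (b : ℕ) + 1 < n := by omega
    set c : Fin n := ⟨(b : ℕ) + 1, by omega⟩ with hc
    have hcv : (c : ℕ) = (b : ℕ) + 1 := rfl
    have hca : (c : ℕ) < (a : ℕ) := by omega
    have hbc : (b : ℕ) < (c : ℕ) := by omega
    have key : ⁅tv a c hca α, tv c b hbc 1⁆ = tv a b (by omega) (α * 1) := tv_comm a c b hca hbc α 1
    rw [mul_one] at key
    rw [show tv a b hab α = tv a b (by omega : (b:ℕ) < (a:ℕ)) α from rfl, ← key]
    have mem := Subgroup.commutator_mem_commutator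
      (ih a c hca α (by omega)) (Subgroup.mem_top (tv c b hbc 1))
    have hle : ⁅Subgroup.lowerCentralSeries (⊤ : Subgroup (UTg n K)) m, (⊤ : Subgroup (UTg n K))⁆ ≤
        Subgroup.lowerCentralSeries (⊤ : Subgroup (UTg n K)) (m + 1) := le_of_eq (Subgroup.lowerCentralSeries_succ ⊤ m).symm
    exact hle mem

/-! ## elimination -/

def eprod (m : ℕ) (A : Matrix (Fin n) (Fin n) K) : ℕ → UTg n K
  | 0 => 1
  | (j+1) => eprod m A j *
      (if h : j + m < n ∧ 1 ≤ m then
        tv ⟨j + m, h.1⟩ ⟨j, by omega⟩ (by simp; omega) (A ⟨j + m, h.1⟩ ⟨j, by omega⟩) else 1)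

lemma eprod_depM (m : ℕ) (A : Matrix (Fin n) (Fin n) K) (J : ℕ) : depM m (eprod m A J) := by
  induction J with
  | zero =>
    show Dep m _
    simpa [eprod] using Dep.zero m
  | succ J ih =>
    show depM m (eprod m A J * _)
    refine depM.mul ih ?_
    split
    · next h => exact depM_tv (by simp)
    · show Dep m _; simpa using Dep.zero m

lemma eprod_mem (m : ℕ) (A : Matrix (Fin n) (Fin n) K) (J : ℕ) (H : Subgroup (UTg n K))
    (hH : ∀ (a b : Fin n) (hab : (b : ℕ) < (a : ℕ)) (α : K), (b : ℕ) + m ≤ (a : ℕ) →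
      tv a b hab α ∈ H) : eprod m A J ∈ H := by
  induction J with
  | zero => exact H.one_mem
  | succ J ih =>
    refine H.mul_mem ih ?_
    split
    · next h => exact hH _ _ _ _ (by simp)
    · exact H.one_mem

lemma eprod_coord (m : ℕ) (hm : 1 ≤ m) (A : Matrix (Fin n) (Fin n) K) (J : ℕ)
    (i j : Fin n) (hij : (i : ℕ) = (j : ℕ) + m) :
    (mval (eprod m A J) - 1) i j = if (j : ℕ) < J then A i j else 0 := by
  induction J with
  | zero =>
    simp only [eprod, mval_one, Nat.not_lt_zero, if_false]
    simp
  | succ J ih =>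
    have hdt : depM m (if h : J + m < n ∧ 1 ≤ m then
        tv ⟨J + m, h.1⟩ ⟨J, by omega⟩ (by simp; omega) (A ⟨J + m, h.1⟩ ⟨J, by omega⟩)
        else 1) := by
      split
      · next h => exact depM_tv (by simp)
      · show Dep m _; simpa using Dep.zero m
    rw [show eprod m A (J+1) = eprod m A J * (if h : J + m < n ∧ 1 ≤ m then
        tv ⟨J + m, h.1⟩ ⟨J, by omega⟩ (by simp; omega) (A ⟨J + m, h.1⟩ ⟨J, by omega⟩)
        else 1) from rfl]
    rw [coord_mul hm (eprod_depM m A J) hdt i j hij]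
    rw [ih]
    by_cases hjJ : (j : ℕ) = J
    · have hin : (i : ℕ) = J + m := by omega
      have hJn : J + m < n ∧ 1 ≤ m := ⟨by omega, hm⟩
      rw [dif_pos hJn]
      rw [tv_sub_one]
      have hi' : i = (⟨J + m, hJn.1⟩ : Fin n) := Fin.ext (by simpa using hin)
      have hj' : j = (⟨J, by omega⟩ : Fin n) := Fin.ext (by simpa using hjJ)
      rw [if_neg (by omega), zero_add]
      rw [if_pos (by omega)]
      simp [hi', hj', Emat_apply]
    · have hterm : ∀ w : UTg n K, depM m w →
        (∀ i' j' : Fin n, (i' : ℕ) = (j' : ℕ) + m → (j' : ℕ) ≠ J → (mval w - 1) i' j' = 0) →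
        True := fun _ _ _ => trivial
      have : (mval (if h : J + m < n ∧ 1 ≤ m then
          tv ⟨J + m, h.1⟩ ⟨J, by omega⟩ (by simp; omega) (A ⟨J + m, h.1⟩ ⟨J, by omega⟩)
          else 1) - 1) i j = 0 := by
        split
        · next h =>
          rw [tv_sub_one]
          simp only [Emat_apply, ite_eq_right_iff, and_imp]
          intro hi1 hj1
          exfalso
          apply hjJ
          rw [hj1]
        · simp
      rw [this, add_zero]
      by_cases hjlt : (j : ℕ) < J
      · rw [if_pos hjlt, if_pos (by omega)]
      · rw [if_neg hjlt, if_neg (by omega)]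

lemma elim_aux : ∀ (s m : ℕ), 1 ≤ m → n ≤ m + s → ∀ (H : Subgroup (UTg n K)),
    (∀ (a b : Fin n) (hab : (b : ℕ) < (a : ℕ)) (α : K), (b : ℕ) + m ≤ (a : ℕ) →
      tv a b hab α ∈ H) → ∀ u : UTg n K, depM m u → u ∈ H := by
  intro s
  induction s with
  | zero =>
    intro m hm hn H hH u hu
    have : mval u - 1 = 0 := Dep.eq_zero (hu.mono (by omega))
    have : u = 1 := mval_inj (by rw [mval_one]; exact sub_eq_zero.mp this)
    rw [this]; exact H.one_mem
  | succ s ih =>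
    intro m hm hn H hH u hu
    rcases le_or_gt n (m + s) with h | h
    · exact ih m hm h H hH u hu
    · set P := eprod m (mval u - 1) n with hP
      have hPd : depM m P := eprod_depM m _ n
      have hB : depM (m + 1) (u * P⁻¹) := by
        refine depM_succ_of_coords (hu.mul hPd.inv) ?_
        intro i j hij
        rw [coord_mul hm hu hPd.inv i j hij]
        rw [coord_inv hm hPd i j hij]
        rw [eprod_coord m hm _ n i j hij]
        rw [if_pos (j.2)]
        ring
      have hmem1 : u * P⁻¹ ∈ H := by
        refine ih (m + 1) (by omega) (by omega) H ?_ _ hB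
        intro a b hab α hba
        exact hH a b hab α (by omega)
      have hmem2 : P ∈ H := eprod_mem m _ n H hH
      have : (u * P⁻¹) * P = u := by group
      rw [← this]
      exact H.mul_mem hmem1 hmem2

lemma elim (m : ℕ) (hm : 1 ≤ m) (H : Subgroup (UTg n K))
    (hH : ∀ (a b : Fin n) (hab : (b : ℕ) < (a : ℕ)) (α : K), (b : ℕ) + m ≤ (a : ℕ) →
      tv a b hab α ∈ H) (u : UTg n K) (hu : depM m u) : u ∈ H :=
  elim_aux n m hm (by omega) H hH u hu

lemma Tsub_le_lcs (m : ℕ) {u : UTg n K} (hu : depM (m + 1) u) :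
    u ∈ Subgroup.lowerCentralSeries (⊤ : Subgroup (UTg n K)) m := by
  refine elim (m + 1) (by omega) _ ?_ u hu
  intro a b hab α hba
  exact tv_mem_lcs m a b hab α hba



variable {n : ℕ} {K : Type*} [Field K]

lemma mem_lcs_iff_dep (m : ℕ) (u : UTg n K) :
    u ∈ Subgroup.lowerCentralSeries (⊤ : Subgroup (UTg n K)) m ↔ depM (m + 1) u :=
  ⟨fun h => lcs_le_Tsub m h, fun h => Tsub_le_lcs m h⟩

def piq (n k : ℕ) (K : Type*) [Field K] : UTg n K →* Gamma n k K :=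
  QuotientGroup.mk' _

lemma piq_surj (k : ℕ) : Function.Surjective (piq n k K) :=
  QuotientGroup.mk'_surjective _

lemma piq_eq_iff {k : ℕ} (hk : 1 ≤ k) (u v : UTg n K) :
    piq n k K u = piq n k K v ↔ Dep k (mval v - mval u) := by
  have base : piq n k K u = piq n k K v ↔ u⁻¹ * v ∈ Subgroup.lowerCentralSeries (⊤ : Subgroup (UTg n K)) (k - 1) :=
    QuotientGroup.eq
  rw [base, mem_lcs_iff_dep, show k - 1 + 1 = k by omega]
  constructor
  · intro h
    have e : mval v - mval u = mval u * (mval (u⁻¹ * v) - 1) := by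
      rw [mul_sub, mul_one, ← mval_mul]
      rw [show u * (u⁻¹ * v) = v by group]
    rw [e]
    simpa using Dep.mul (mval_dep0 u) h
  · intro h
    show Dep k _
    have e : mval (u⁻¹ * v) - 1 = mval u⁻¹ * (mval v - mval u) := by
      rw [mul_sub, ← mval_mul]
      rw [show u⁻¹ * v = u⁻¹ * v from rfl]
      have : mval u⁻¹ * mval u = 1 := mval_inv_mul u
      rw [this]
    rw [e]
    simpa using Dep.mul (mval_dep0 u⁻¹) h

lemma piq_one_iff {k : ℕ} (hk : 1 ≤ k) (u : UTg n K) :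
    piq n k K u = 1 ↔ Dep k (mval u - 1) := by
  have h := piq_eq_iff hk (1 : UTg n K) u
  rw [MonoidHom.map_one] at h
  simp only [mval_one] at h
  exact ⟨fun h2 => h.mp h2.symm, fun hd => (h.mpr hd).symm⟩

/-! ## generation by simple transvections -/

def SimpleTv (n : ℕ) (K : Type*) [Field K] : Set (UTg n K) :=
  {u | ∃ (i : ℕ) (h : i + 1 < n) (α : K),
    u = tv ⟨i + 1, h⟩ ⟨i, by omega⟩ (Nat.lt_succ_self i) α}

lemma tv_mem_closure_simple : ∀ (d : ℕ) (a b : Fin n) (hab : (b : ℕ) < (a : ℕ)) (α : K),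
    (a : ℕ) ≤ (b : ℕ) + d + 1 → tv a b hab α ∈ Subgroup.closure (SimpleTv n K) := by
  intro d
  induction d with
  | zero =>
    intro a b hab α h
    have hbn : (b : ℕ) + 1 < n := by have := a.2; omega
    apply Subgroup.subset_closure
    refine ⟨(b : ℕ), hbn, α, ?_⟩
    apply mval_inj
    rw [mval_tv, mval_tv]
    have ha : a = (⟨(b : ℕ) + 1, hbn⟩ : Fin n) := Fin.ext (by simp; omega)
    rw [ha, show (⟨(b : ℕ), by omega⟩ : Fin n) = b from Fin.ext rfl]
  | succ d ih =>
    intro a b hab α h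
    rcases le_or_gt (a : ℕ) ((b : ℕ) + d + 1) with h' | h'
    · exact ih a b hab α h'
    · have han : (a : ℕ) < n := a.2
      have hbn : (b : ℕ) + 1 < n := by omega
      set c : Fin n := ⟨(b : ℕ) + 1, hbn⟩ with hc
      have hcv : (c : ℕ) = (b : ℕ) + 1 := rfl
      have hca : (c : ℕ) < (a : ℕ) := by omega
      have hbc : (b : ℕ) < (c : ℕ) := by omega
      have key : ⁅tv a c hca α, tv c b hbc 1⁆ = tv a b (by omega) (α * 1) :=
        tv_comm a c b hca hbc α 1
      rw [mul_one] at key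
      rw [show tv a b hab α = tv a b (by omega : (b:ℕ) < (a:ℕ)) α from rfl, ← key]
      rw [commutatorElement_def]
      have h1 : tv a c hca α ∈ Subgroup.closure (SimpleTv n K) :=
        ih a c hca α (by omega)
      have h2 : tv c b hbc 1 ∈ Subgroup.closure (SimpleTv n K) :=
        ih c b hbc 1 (by omega)
      exact Subgroup.mul_mem _ (Subgroup.mul_mem _ (Subgroup.mul_mem _ h1 h2)
        (Subgroup.inv_mem _ h1)) (Subgroup.inv_mem _ h2)

lemma mem_closure_simple (u : UTg n K) : u ∈ Subgroup.closure (SimpleTv n K) := by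
  refine elim 1 le_rfl _ ?_ u (depM.one' u)
  intro a b hab α hba
  exact tv_mem_closure_simple ((a : ℕ) - (b : ℕ)) a b hab α (by omega)

/-! ## prime field -/

lemma prime_field_scalar (hK : (⊥ : Subfield K) = ⊤) (f : K → K)
    (hf : ∀ x y, f (x + y) = f x + f y) (α : K) : f α = α * f 1 := by
  have f0 : f 0 = 0 := by
    have h00 := hf 0 0
    rw [add_zero] at h00
    exact left_eq_add.mp h00
  let F : K →+ K := AddMonoidHom.mk' f hf
  have hz : ∀ (b : ℤ) (x : K), f (b • x) = b • f x := fun b x => map_zsmul F b x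
  set P : Subfield K := {
    carrier := {α | ∃ (a b : ℤ), (b : K) ≠ 0 ∧ α * b = a}
    zero_mem' := ⟨0, 1, by simp, by simp⟩
    one_mem' := ⟨1, 1, by simp, by simp⟩
    add_mem' := by
      rintro x y ⟨a, b, hb, hx⟩ ⟨c, d, hd, hy⟩
      refine ⟨a * d + c * b, b * d, by push_cast; exact mul_ne_zero hb hd, ?_⟩
      push_cast
      calc (x + y) * ((b : K) * d) = (x * b) * d + (y * d) * b := by ring
      _ = (a : K) * d + (c : K) * b := by rw [hx, hy]
    neg_mem' := by
      rintro x ⟨a, b, hb, hx⟩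
      exact ⟨-a, b, hb, by push_cast; rw [neg_mul, hx]⟩
    mul_mem' := by
      rintro x y ⟨a, b, hb, hx⟩ ⟨c, d, hd, hy⟩
      refine ⟨a * c, b * d, by push_cast; exact mul_ne_zero hb hd, ?_⟩
      push_cast
      calc x * y * ((b : K) * d) = (x * b) * (y * d) := by ring
      _ = (a : K) * c := by rw [hx, hy]
    inv_mem' := by
      rintro x ⟨a, b, hb, hx⟩
      by_cases hx0 : x = 0
      · exact ⟨0, 1, by simp, by simp [hx0]⟩
      · have ha : (a : K) ≠ 0 := by
          rw [← hx]
          exact mul_ne_zero hx0 hb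
        refine ⟨b, a, ha, ?_⟩
        field_simp
        rw [← hx] } with hPdef
  have hmem : α ∈ P := by
    have : α ∈ (⊤ : Subfield K) := trivial
    rw [← hK] at this
    exact (bot_le : (⊥ : Subfield K) ≤ P) this
  obtain ⟨a, b, hb, hab⟩ := hmem
  have key : (b : K) * f α = (b : K) * (α * f 1) := by
    have h1 : (b : K) * f α = f ((b : ℤ) • α) := by
      rw [hz b α, zsmul_eq_mul]
    have h2 : f ((b : ℤ) • α) = f ((a : ℤ) • (1 : K)) := by
      congr 1
      rw [zsmul_eq_mul, zsmul_eq_mul, mul_one, mul_comm]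
      exact hab
    have h3 : f ((a : ℤ) • (1 : K)) = (a : K) * f 1 := by
      rw [hz a 1, zsmul_eq_mul]
    rw [h1, h2, h3, ← hab]
    ring
  exact mul_left_cancel₀ hb key



variable {n : ℕ} {K : Type*} [Field K]

lemma mval_diag_one (u : UTg n K) (a : Fin n) : mval u a a = 1 := u.2.1.1 a

lemma mval_upper_zero (u : UTg n K) {a b : Fin n} (h : (a : ℕ) < (b : ℕ)) :
    mval u a b = 0 := u.2.1.2 a b h

lemma mul_emat_mul_apply (M N : Matrix (Fin n) (Fin n) K) (a0 b0 : Fin n) (c : K)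
    (a b : Fin n) : (M * Emat a0 b0 c * N) a b = M a a0 * c * N b0 b := by
  rw [Matrix.mul_apply]
  rw [Finset.sum_eq_single b0]
  · rw [mul_Emat_apply, if_pos rfl]
  · intro l _ hl
    rw [mul_Emat_apply, if_neg hl, zero_mul]
  · intro h; exact absurd (Finset.mem_univ b0) h

/-- the generator `s_i(β)` -/
def sg (i : ℕ) (hi : i + 1 < n) (β : K) : UTg n K :=
  tv ⟨i + 1, hi⟩ ⟨i, by omega⟩ (Nat.lt_succ_self i) β

lemma sg_sub_one (i : ℕ) (hi : i + 1 < n) (β : K) :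
    mval (sg i hi β) - 1 = Emat ⟨i + 1, hi⟩ ⟨i, by omega⟩ β := tv_sub_one _ _ _ _

lemma sg_inv_sub_one (i : ℕ) (hi : i + 1 < n) (β : K) :
    mval (sg i hi β)⁻¹ - 1 = Emat ⟨i + 1, hi⟩ ⟨i, by omega⟩ (-β) := tv_inv_sub_one _ _ _ _

lemma sg_mul (i : ℕ) (hi : i + 1 < n) (β β' : K) :
    sg i hi β * sg i hi β' = sg i hi (β + β') := tv_mul_same _ _ _ _ _

lemma sg_zero (i : ℕ) (hi : i + 1 < n) : sg i hi (0 : K) = 1 := tv_zero _ _ _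

lemma depM_sg (i : ℕ) (hi : i + 1 < n) (β : K) : depM 1 (sg i hi β) := depM.one' _

variable {k : ℕ}

lemma coord_eq_of_piq_eq (hk : 1 ≤ k) {u v : UTg n K} (h : piq n k K u = piq n k K v)
    {m : ℕ} (hm : m < k) (a b : Fin n) (hab : (a : ℕ) = (b : ℕ) + m) :
    (mval u - 1) a b = (mval v - 1) a b := by
  have hd := (piq_eq_iff hk u v).mp h
  have := hd a b (by omega)
  rw [Matrix.sub_apply] at this
  rw [Matrix.sub_apply, Matrix.sub_apply]
  have h2 : mval v a b = mval u a b := sub_eq_zero.mp this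
  rw [h2]

lemma conj_decomp (φ : MulAut (Gamma n k K)) (hcp : ∀ x, IsConj x (φ x)) (x : UTg n K) :
    ∃ h : UTg n K, φ (piq n k K x) = piq n k K (h * x * h⁻¹) := by
  obtain ⟨c, hc⟩ := isConj_iff.mp (hcp (piq n k K x))
  obtain ⟨h, rfl⟩ := piq_surj k c
  refine ⟨h, ?_⟩
  rw [← hc]
  rw [_root_.map_mul, _root_.map_mul, map_inv]

/-- induction statement: `φ` agrees with conjugation by some `g` on all generators,
up to error terms of depth `≥ m`. -/
def Pm (φ : MulAut (Gamma n k K)) (m : ℕ) : Prop :=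
  ∃ g : UTg n K, ∀ (i : ℕ) (hi : i + 1 < n) (β : K), ∃ S : UTg n K, depM m S ∧
    φ (piq n k K (sg i hi β)) =
      piq n k K g * piq n k K (sg i hi β) * piq n k K S * (piq n k K g)⁻¹

lemma Pm_base (hk : 2 ≤ k) (φ : MulAut (Gamma n k K)) (hcp : ∀ x, IsConj x (φ x)) :
    Pm φ 2 := by
  refine ⟨1, ?_⟩
  intro i hi β
  obtain ⟨h, hh⟩ := conj_decomp φ hcp (sg i hi β)
  set x := sg i hi β with hx
  refine ⟨x⁻¹ * (h * x * h⁻¹), ?_, ?_⟩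
  · refine depM_succ_of_coords (by exact depM.mul (depM.one' _) (depM.one' _)) ?_
    intro a b hab
    rw [coord_mul le_rfl (depM.one' _) ((depM.one' x).conj h) a b hab]
    rw [coord_inv le_rfl (depM.one' x) a b hab]
    rw [coord_conj le_rfl h (depM.one' x) a b hab]
    ring
  · rw [hh]
    rw [MonoidHom.map_one, one_mul, inv_one, mul_one]
    rw [← _root_.map_mul]
    congr 1
    group



variable {n : ℕ} {K : Type*} [Field K] {k : ℕ}

lemma Emat_apply_ne {a0 b0 : Fin n} {c : K} {a b : Fin n}
    (h : (a : ℕ) ≠ (a0 : ℕ) ∨ (b : ℕ) ≠ (b0 : ℕ)) : Emat a0 b0 c a b = 0 := by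
  rw [Emat_apply, if_neg]
  rintro ⟨rfl, rfl⟩
  rcases h with h | h <;> exact h rfl

lemma window_eq (hk : 1 ≤ k) {u v : UTg n K} (h : piq n k K u = piq n k K v)
    (a b : Fin n) (h2 : (a : ℕ) < (b : ℕ) + k) : mval u a b = mval v a b := by
  have hd := (piq_eq_iff hk u v).mp h
  have := hd a b h2
  rw [Matrix.sub_apply] at this
  exact (sub_eq_zero.mp this).symm

lemma key_decomp (φ : MulAut (Gamma n k K)) (hcp : ∀ x, IsConj x (φ x)) (g : UTg n K)
    {x S : UTg n K}
    (hrel : φ (piq n k K x) = piq n k K g * piq n k K x * piq n k K S * (piq n k K g)⁻¹) :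
    ∃ h' : UTg n K, piq n k K (h' * x * h'⁻¹) = piq n k K (x * S) := by
  obtain ⟨h, hh⟩ := conj_decomp φ hcp x
  refine ⟨g⁻¹ * h, ?_⟩
  have e1 : piq n k K ((g⁻¹ * h) * x * (g⁻¹ * h)⁻¹) =
      (piq n k K g)⁻¹ * piq n k K (h * x * h⁻¹) * piq n k K g := by
    rw [_root_.mul_inv_rev, inv_inv]
    simp only [_root_.map_mul, map_inv]
    group
  rw [e1, ← hh, hrel, _root_.map_mul]
  group

section step
variable (m : ℕ) (hm2 : 2 ≤ m) (hmk : m + 1 ≤ k)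
variable (φ : MulAut (Gamma n k K)) (hcp : ∀ x, IsConj x (φ x)) (g : UTg n K)
variable (S : ∀ (i : ℕ), i + 1 < n → K → UTg n K)
variable (hS : ∀ (i : ℕ) (hi : i + 1 < n) (β : K), depM m (S i hi β))
variable (hrel : ∀ (i : ℕ) (hi : i + 1 < n) (β : K),
  φ (piq n k K (sg i hi β)) = piq n k K g * piq n k K (sg i hi β) *
    piq n k K (S i hi β) * (piq n k K g)⁻¹)

include hm2 hmk hS hrel

omit hS in
include hcp in
lemma S_zero_coord (i : ℕ) (hi : i + 1 < n) (a b : Fin n) (hab : (a : ℕ) = (b : ℕ) + m) :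
    (mval (S i hi 0) - 1) a b = 0 := by
  have h1 := hrel i hi 0
  rw [sg_zero] at h1
  rw [MonoidHom.map_one] at h1
  rw [MulEquiv.map_one] at h1
  have h2 : piq n k K (S i hi 0) = 1 := by
    calc piq n k K (S i hi 0)
        = (piq n k K g)⁻¹ * (piq n k K g * 1 * piq n k K (S i hi 0) * (piq n k K g)⁻¹) *
          piq n k K g := by group
      _ = (piq n k K g)⁻¹ * 1 * piq n k K g := by rw [← h1]
      _ = 1 := by group
  have h3 : Dep k (mval (S i hi 0) - 1) := (piq_one_iff (by omega) _).mp h2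
  exact h3 a b (by omega)

include hcp in
lemma S_support (i : ℕ) (hi : i + 1 < n) (β : K) (a b : Fin n)
    (hab : (a : ℕ) = (b : ℕ) + m) (hb1 : (b : ℕ) ≠ i) (hb2 : (b : ℕ) + m ≠ i + 1) :
    (mval (S i hi β) - 1) a b = 0 := by
  by_cases hβ : β = 0
  · subst hβ; exact S_zero_coord m hm2 hmk φ hcp g S hrel i hi a b hab
  set ip1 : Fin n := ⟨i + 1, hi⟩ with hip1
  set ii : Fin n := ⟨i, by omega⟩ with hii
  obtain ⟨h', key⟩ := key_decomp φ hcp g (hrel i hi β)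
  -- window equations
  have hEq : ∀ a b : Fin n, (a : ℕ) < (b : ℕ) + k →
      mval h' a ip1 * β * mval h'⁻¹ ii b =
      Emat ip1 ii β a b + (mval (S i hi β) - 1) a b +
        (Emat ip1 ii β * (mval (S i hi β) - 1)) a b := by
    intro a b hw
    have w := window_eq (by omega) key a b hw
    have lhs_eq : mval (h' * sg i hi β * h'⁻¹) a b =
        (1 : Matrix (Fin n) (Fin n) K) a b + mval h' a ip1 * β * mval h'⁻¹ ii b := by
      have e := conj_sub_one h' (sg i hi β)
      rw [sg_sub_one] at e
      have e2 := congrFun (congrFun (congrArg (fun M => M) e) a) b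
      simp only [Matrix.sub_apply] at e2
      rw [mul_emat_mul_apply] at e2
      linear_combination e2
    have rhs_eq : mval (sg i hi β * S i hi β) a b =
        (1 : Matrix (Fin n) (Fin n) K) a b + Emat ip1 ii β a b +
          (mval (S i hi β) - 1) a b + (Emat ip1 ii β * (mval (S i hi β) - 1)) a b := by
      have e := mul_sub_one (sg i hi β) (S i hi β)
      rw [sg_sub_one] at e
      have e2 := congrFun (congrFun (congrArg (fun M => M) e) a) b
      simp only [Matrix.sub_apply, Matrix.add_apply] at e2
      rw [Matrix.sub_apply]
      linear_combination e2
    rw [lhs_eq, rhs_eq] at w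
    linear_combination w
  have herr : ∀ a b : Fin n, (a : ℕ) < (b : ℕ) + 1 + m →
      (Emat ip1 ii β * (mval (S i hi β) - 1)) a b = 0 := by
    intro a b h
    exact Dep.mul (Dep.emat (d := 1) (by simp [hip1, hii])) (hS i hi β) a b (by omega)
  -- column fact
  have col : ∀ a : Fin n, (i : ℕ) < (a : ℕ) → (a : ℕ) < i + m → (a : ℕ) ≠ i + 1 →
      mval h' a ip1 = 0 := by
    intro a ha1 ha2 ha3
    have hw : (a : ℕ) < (ii : ℕ) + k := by simp [hii]; omega
    have e := hEq a ii hw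
    rw [mval_diag_one h'⁻¹ ii] at e
    rw [Emat_apply_ne (Or.inl (by simp [hip1]; omega))] at e
    rw [hS i hi β a ii (by simp [hii]; omega)] at e
    rw [herr a ii (by simp [hii]; omega)] at e
    simp at e
    rcases e with e | e
    · exact e
    · exact absurd e hβ
  -- conclude
  have coordS : (mval (S i hi β) - 1) a b = mval h' a ip1 * β * mval h'⁻¹ ii b := by
    have e := hEq a b (by omega)
    rw [Emat_apply_ne (Or.inr (by simp [hii]; omega))] at e
    rw [herr a b (by omega)] at e
    linear_combination -e
  rw [coordS]
  rcases lt_trichotomy (b : ℕ) (i : ℕ) with hb | hb | hb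
  · rcases lt_trichotomy (a : ℕ) (i + 1) with ha | ha | ha
    · rw [mval_upper_zero h' (show (a : ℕ) < (ip1 : ℕ) by simp [hip1]; omega)]
      ring
    · exact absurd (by omega : (b : ℕ) + m = i + 1) hb2
    · rw [col a (by omega) (by omega) (by omega)]
      ring
  · exact absurd hb hb1
  · rw [mval_upper_zero h'⁻¹ (show (ii : ℕ) < (b : ℕ) by simp [hii]; omega)]
    ring

omit hcp hS in
lemma S_piq_add (i : ℕ) (hi : i + 1 < n) (β β' : K) :
    piq n k K (S i hi (β + β')) =
      piq n k K ((sg i hi β')⁻¹ * S i hi β * sg i hi β' * S i hi β') := by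
  have e1 := hrel i hi (β + β')
  have e2 := hrel i hi β
  have e3 := hrel i hi β'
  have emul : φ (piq n k K (sg i hi (β + β'))) =
      φ (piq n k K (sg i hi β)) * φ (piq n k K (sg i hi β')) := by
    rw [← _root_.map_mul, ← _root_.map_mul, sg_mul]
  rw [e1, e2, e3] at emul
  have hq : piq n k K (sg i hi (β + β')) * piq n k K (S i hi (β + β')) =
      piq n k K (sg i hi β) * piq n k K (S i hi β) *
        piq n k K (sg i hi β') * piq n k K (S i hi β') := by
    calc piq n k K (sg i hi (β + β')) * piq n k K (S i hi (β + β'))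
        = (piq n k K g)⁻¹ * (piq n k K g * piq n k K (sg i hi (β + β')) *
            piq n k K (S i hi (β + β')) * (piq n k K g)⁻¹) * piq n k K g := by group
      _ = (piq n k K g)⁻¹ * ((piq n k K g * piq n k K (sg i hi β) * piq n k K (S i hi β) *
            (piq n k K g)⁻¹) * (piq n k K g * piq n k K (sg i hi β') *
            piq n k K (S i hi β') * (piq n k K g)⁻¹)) * piq n k K g := by rw [emul]
      _ = _ := by group
  have hA : piq n k K (sg i hi (β + β')) =
      piq n k K (sg i hi β) * piq n k K (sg i hi β') := by
    rw [← _root_.map_mul, sg_mul]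
  rw [hA] at hq
  rw [_root_.map_mul, _root_.map_mul, _root_.map_mul, map_inv]
  calc piq n k K (S i hi (β + β'))
      = (piq n k K (sg i hi β) * piq n k K (sg i hi β'))⁻¹ *
        (piq n k K (sg i hi β) * piq n k K (sg i hi β') *
          piq n k K (S i hi (β + β'))) := by group
    _ = (piq n k K (sg i hi β) * piq n k K (sg i hi β'))⁻¹ *
        (piq n k K (sg i hi β) * piq n k K (S i hi β) *
          piq n k K (sg i hi β') * piq n k K (S i hi β')) := by rw [hq]
    _ = _ := by group

omit hcp in
lemma S_additive (i : ℕ) (hi : i + 1 < n) (β β' : K) (a b : Fin n)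
    (hab : (a : ℕ) = (b : ℕ) + m) :
    (mval (S i hi (β + β')) - 1) a b =
      (mval (S i hi β) - 1) a b + (mval (S i hi β') - 1) a b := by
  have hpiq := S_piq_add m hm2 hmk φ g S hrel i hi β β'
  have hc := coord_eq_of_piq_eq (by omega) hpiq (by omega : m < k) a b hab
  rw [hc]
  have hconj : depM m ((sg i hi β')⁻¹ * S i hi β * sg i hi β') := by
    have := (hS i hi β).conj (sg i hi β')⁻¹
    rwa [inv_inv] at this
  rw [show (sg i hi β')⁻¹ * S i hi β * sg i hi β' * S i hi β' =
      ((sg i hi β')⁻¹ * S i hi β * sg i hi β') * S i hi β' from by group]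
  rw [coord_mul (by omega) hconj (hS i hi β') a b hab]
  rw [show (sg i hi β')⁻¹ * S i hi β * sg i hi β' =
      (sg i hi β')⁻¹ * S i hi β * ((sg i hi β')⁻¹)⁻¹ from by rw [inv_inv]]
  rw [coord_conj (by omega) (sg i hi β')⁻¹ (hS i hi β) a b hab]

omit hcp in
lemma S_linear (hK : (⊥ : Subfield K) = ⊤) (i : ℕ) (hi : i + 1 < n) (β : K) (a b : Fin n)
    (hab : (a : ℕ) = (b : ℕ) + m) :
    (mval (S i hi β) - 1) a b = β * ((mval (S i hi 1) - 1) a b) := by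
  exact prime_field_scalar hK (fun β => (mval (S i hi β) - 1) a b)
    (fun x y => S_additive m hm2 hmk φ g S hS hrel i hi x y a b hab) β

end step


variable {n : ℕ} {K : Type*} [Field K] {k : ℕ}

lemma fin_vne {a b : Fin n} (h : a ≠ b) : (a : ℕ) ≠ (b : ℕ) := fun hv => h (Fin.ext hv)

lemma sum_two {f : Fin n → K} (c1 c2 : Fin n) (hne : c1 ≠ c2)
    (hz : ∀ l, l ≠ c1 → l ≠ c2 → f l = 0) : (∑ l, f l) = f c1 + f c2 := by
  rw [← Finset.sum_pair hne]
  apply (Finset.sum_subset (Finset.subset_univ _) ?_).symm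
  intro x _ hx
  simp only [Finset.mem_insert, Finset.mem_singleton, not_or] at hx
  exact hz x hx.1 hx.2

section step
variable (m : ℕ) (hm2 : 2 ≤ m) (hmk : m + 1 ≤ k)
variable (φ : MulAut (Gamma n k K)) (hcp : ∀ x, IsConj x (φ x)) (g : UTg n K)
variable (S : ∀ (i : ℕ), i + 1 < n → K → UTg n K)
variable (hS : ∀ (i : ℕ) (hi : i + 1 < n) (β : K), depM m (S i hi β))
variable (hrel : ∀ (i : ℕ) (hi : i + 1 < n) (β : K),
  φ (piq n k K (sg i hi β)) = piq n k K g * piq n k K (sg i hi β) *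
    piq n k K (S i hi β) * (piq n k K g)⁻¹)

include hm2 hmk hS hrel hcp

lemma S_pair (i : ℕ) (hi0 : i < n) (hi : i + 1 < n) (hgen1 : i + m < n)
    (hgen2 : i + m + 1 < n) :
    (mval (S (i + m) hgen2 1) - 1) ⟨i + m + 1, hgen2⟩ ⟨i + 1, hi⟩ =
      -((mval (S i hi 1) - 1) ⟨i + m, hgen1⟩ ⟨i, hi0⟩) := by
  set ii : Fin n := ⟨i, hi0⟩ with hii
  set ip1 : Fin n := ⟨i + 1, hi⟩ with hip1
  set iim : Fin n := ⟨i + m, hgen1⟩ with hiim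
  set ipm1 : Fin n := ⟨i + m + 1, hgen2⟩ with hipm1
  have vii : ((ii : Fin n) : ℕ) = i := rfl
  have vip1 : ((ip1 : Fin n) : ℕ) = i + 1 := rfl
  have viim : ((iim : Fin n) : ℕ) = i + m := rfl
  have vipm1 : ((ipm1 : Fin n) : ℕ) = i + m + 1 := rfl
  set x1 := sg i hi (1 : K) with hx1
  set x2 := sg (i + m) hgen2 (1 : K) with hx2
  set S1 := S i hi (1 : K) with hS1
  set S2 := S (i + m) hgen2 (1 : K) with hS2
  set W := (x2⁻¹ * S1 * x2) * S2 with hW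
  have hWd : depM m W := by
    refine depM.mul ?_ (hS _ _ _)
    have := (hS i hi 1).conj x2⁻¹
    rwa [inv_inv] at this
  have coordW : ∀ a b : Fin n, (a : ℕ) = (b : ℕ) + m →
      (mval W - 1) a b = (mval S1 - 1) a b + (mval S2 - 1) a b := by
    intro a b hab
    rw [hW]
    have hconj : depM m (x2⁻¹ * S1 * x2) := by
      have := (hS i hi 1).conj x2⁻¹
      rwa [inv_inv] at this
    rw [coord_mul (by omega) hconj (hS _ _ _) a b hab]
    rw [show x2⁻¹ * S1 * x2 = x2⁻¹ * S1 * (x2⁻¹)⁻¹ from by rw [inv_inv]]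
    rw [coord_conj (by omega) x2⁻¹ (hS i hi 1) a b hab]
  -- combined relation
  have hrel12 : φ (piq n k K (x1 * x2)) =
      piq n k K g * piq n k K (x1 * x2) * piq n k K W * (piq n k K g)⁻¹ := by
    rw [_root_.map_mul (piq n k K), _root_.map_mul φ]
    rw [hrel i hi 1, hrel (i + m) hgen2 1]
    rw [hW]
    simp only [_root_.map_mul, map_inv]
    rw [hx1, hx2, hS1, hS2]
    group
  obtain ⟨h', key⟩ := key_decomp φ hcp g hrel12
  have hx12 : mval (x1 * x2) - 1 = Emat ip1 ii (1:K) + Emat ipm1 iim (1:K) := by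
    rw [mval_mul, hx1, hx2]
    rw [show mval (sg i hi (1:K)) = 1 + Emat ip1 ii (1:K) from
      sub_eq_iff_eq_add'.mp (sg_sub_one i hi 1)]
    rw [show mval (sg (i + m) hgen2 (1:K)) = 1 + Emat ipm1 iim (1:K) from
      sub_eq_iff_eq_add'.mp (sg_sub_one (i + m) hgen2 1)]
    have hz : Emat ip1 ii (1:K) * Emat ipm1 iim (1:K) = 0 :=
      Emat_mul_Emat _ _ _ _ _ _ (Fin.ne_of_val_ne (by omega))
    have expand : (1 + Emat ip1 ii (1:K)) * (1 + Emat ipm1 iim (1:K)) =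
        1 + Emat ip1 ii (1:K) + Emat ipm1 iim (1:K) + Emat ip1 ii (1:K) * Emat ipm1 iim (1:K) := by
      noncomm_ring
    rw [expand, hz, add_zero]
    abel
  have herr : ∀ a b : Fin n, (a : ℕ) < (b : ℕ) + 1 + m →
      ((Emat ip1 ii (1:K) + Emat ipm1 iim (1:K)) * (mval W - 1)) a b = 0 := by
    intro a b h
    refine Dep.mul (Dep.add (Dep.emat (d := 1) (by omega))
      (Dep.emat (d := 1) (by omega))) hWd a b (by omega)
  have hEq : ∀ a b : Fin n, (a : ℕ) < (b : ℕ) + k →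
      mval h' a ip1 * mval h'⁻¹ ii b + mval h' a ipm1 * mval h'⁻¹ iim b =
      Emat ip1 ii (1:K) a b + Emat ipm1 iim (1:K) a b + (mval W - 1) a b +
        ((Emat ip1 ii (1:K) + Emat ipm1 iim (1:K)) * (mval W - 1)) a b := by
    intro a b hw
    have w := window_eq (by omega) key a b hw
    have lhs_eq : mval (h' * (x1 * x2) * h'⁻¹) a b =
        (1 : Matrix (Fin n) (Fin n) K) a b +
          (mval h' a ip1 * mval h'⁻¹ ii b + mval h' a ipm1 * mval h'⁻¹ iim b) := by
      have e := conj_sub_one h' (x1 * x2)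
      rw [hx12] at e
      have e2 := congrFun (congrFun (congrArg (fun M => M) e) a) b
      simp only [Matrix.sub_apply] at e2
      rw [show mval h' * (Emat ip1 ii (1:K) + Emat ipm1 iim (1:K)) * mval h'⁻¹ =
        mval h' * Emat ip1 ii (1:K) * mval h'⁻¹ + mval h' * Emat ipm1 iim (1:K) * mval h'⁻¹ from by
          noncomm_ring] at e2
      rw [Matrix.add_apply, mul_emat_mul_apply, mul_emat_mul_apply] at e2
      rw [mul_one, mul_one] at e2
      linear_combination e2
    have rhs_eq : mval ((x1 * x2) * W) a b =
        (1 : Matrix (Fin n) (Fin n) K) a b + Emat ip1 ii (1:K) a b + Emat ipm1 iim (1:K) a b +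
          (mval W - 1) a b + ((Emat ip1 ii (1:K) + Emat ipm1 iim (1:K)) * (mval W - 1)) a b := by
      have e := mul_sub_one (x1 * x2) W
      rw [hx12] at e
      have e2 := congrFun (congrFun (congrArg (fun M => M) e) a) b
      simp only [Matrix.sub_apply, Matrix.add_apply] at e2
      rw [Matrix.sub_apply]
      linear_combination e2
    rw [lhs_eq, rhs_eq] at w
    linear_combination w
  -- column fact
  have pf1 : ∀ a : Fin n, (i : ℕ) < (a : ℕ) → (a : ℕ) < i + m → (a : ℕ) ≠ i + 1 →
      mval h' a ip1 = 0 := by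
    intro a ha1 ha2 ha3
    have e := hEq a ii (by omega)
    rw [mval_diag_one h'⁻¹ ii] at e
    rw [mval_upper_zero h' (show (a : ℕ) < (ipm1 : ℕ) by omega)] at e
    rw [Emat_apply_ne (Or.inl (by omega))] at e
    rw [Emat_apply_ne (Or.inl (by omega))] at e
    rw [hWd a ii (by omega)] at e
    rw [herr a ii (by omega)] at e
    simpa using e
  -- gamma extraction
  have pf2 : mval h' iim ip1 = (mval S1 - 1) iim ii := by
    have e := hEq iim ii (by omega)
    rw [mval_diag_one h'⁻¹ ii] at e
    rw [mval_upper_zero h' (show (iim : ℕ) < (ipm1 : ℕ) by omega)] at e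
    rw [Emat_apply_ne (Or.inl (by omega))] at e
    rw [Emat_apply_ne (Or.inl (by omega))] at e
    rw [coordW iim ii (by omega)] at e
    rw [show (mval S2 - 1) iim ii = 0 from
      S_support m hm2 hmk φ hcp g S hS hrel (i + m) hgen2 1 iim ii
        (by omega) (by omega) (by omega)] at e
    rw [herr iim ii (by omega)] at e
    simpa using e
  -- delta extraction
  have pf4 : mval h'⁻¹ iim ip1 = (mval S2 - 1) ipm1 ip1 := by
    have e := hEq ipm1 ip1 (by omega)
    rw [mval_upper_zero h'⁻¹ (show (ii : ℕ) < (ip1 : ℕ) by omega)] at e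
    rw [mval_diag_one h' ipm1] at e
    rw [Emat_apply_ne (Or.inl (by omega))] at e
    rw [Emat_apply_ne (Or.inr (by omega))] at e
    rw [coordW ipm1 ip1 (by omega)] at e
    rw [show (mval S1 - 1) ipm1 ip1 = 0 from
      S_support m hm2 hmk φ hcp g S hS hrel i hi 1 ipm1 ip1
        (by omega) (by omega) (by omega)] at e
    rw [herr ipm1 ip1 (by omega)] at e
    simpa using e
  -- inverse identity
  have pf5 : mval h'⁻¹ iim ip1 + mval h' iim ip1 = 0 := by
    have hinv := mval_inv_mul h'
    have e2 := congrFun (congrFun hinv iim) ip1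
    rw [Matrix.mul_apply] at e2
    rw [sum_two ip1 iim (by apply Fin.ne_of_val_ne; omega) ?_] at e2
    · rw [mval_diag_one h' ip1, mval_diag_one h'⁻¹ iim, mul_one, one_mul] at e2
      rw [e2]
      rw [Matrix.one_apply_ne (by apply Fin.ne_of_val_ne; omega)]
    · intro l hl1 hl2
      have hv1 : (l : ℕ) ≠ i + 1 := by
        intro h; exact hl1 (Fin.ext (by omega))
      have hv2 : (l : ℕ) ≠ i + m := by
        intro h; exact hl2 (Fin.ext (by omega))
      rcases lt_trichotomy ((l : ℕ)) (i + 1) with hl | hl | hl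
      · rw [mval_upper_zero h' (show (l : ℕ) < (ip1 : ℕ) by omega), mul_zero]
      · exact absurd hl hv1
      · rcases lt_or_ge ((l : ℕ)) (i + m) with hl' | hl'
        · rw [pf1 l (by omega) hl' hv1, mul_zero]
        · rw [mval_upper_zero h'⁻¹ (show (iim : ℕ) < (l : ℕ) by omega), zero_mul]
  rw [← pf2, ← pf4]
  linear_combination pf5
end step


variable {n : ℕ} {K : Type*} [Field K] {k : ℕ}

lemma entry_congr {M : Matrix (Fin n) (Fin n) K} {a b a' b' : Fin n}
    (ha : (a : ℕ) = (a' : ℕ)) (hb : (b : ℕ) = (b' : ℕ)) : M a b = M a' b' := by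
  rw [show a = a' from Fin.ext ha, show b = b' from Fin.ext hb]

lemma S_congr (S : ∀ (i : ℕ), i + 1 < n → K → UTg n K) {i i' : ℕ} (h : i = i')
    (hi : i + 1 < n) (hi' : i' + 1 < n) (β : K) : S i hi β = S i' hi' β := by
  subst h; rfl

lemma Pm_step (hK : (⊥ : Subfield K) = ⊤) {m : ℕ} (hm2 : 2 ≤ m) (hmk : m + 1 ≤ k)
    (hkn : k ≤ n) (φ : MulAut (Gamma n k K)) (hcp : ∀ x, IsConj x (φ x)) :
    Pm φ m → Pm φ (m + 1) := by
  rintro ⟨g, hg⟩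
  choose S hS hrel using hg
  have hmn : m < n := by omega
  -- the correction coefficients
  set ζ : ℕ → K := fun c =>
    if h : c + 1 < n ∧ m ≤ c + 1 then
      -((mval (S c h.1 1) - 1) ⟨c + 1, h.1⟩ ⟨c + 1 - m, by omega⟩)
    else if h2 : c = n - 1 then
      ((mval (S (n - 1 - m) (by omega) 1) - 1) ⟨n - 1, by omega⟩ ⟨n - 1 - m, by omega⟩)
    else 0 with hζ
  set Zmat : Matrix (Fin n) (Fin n) K := Matrix.of fun a _ => ζ (a : ℕ) with hZmat
  set z : UTg n K := eprod (m - 1) Zmat n with hzdef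
  have hzdep : depM (m - 1) z := eprod_depM _ _ _
  have zcoord : ∀ a b : Fin n, (a : ℕ) = (b : ℕ) + (m - 1) →
      (mval z - 1) a b = ζ (a : ℕ) := by
    intro a b hab
    rw [hzdef, eprod_coord (m - 1) (by omega) Zmat n a b hab, if_pos b.2]
    rfl
  -- the key fact : ζ (i + m) is the `γ`-coefficient of generator i
  have hzeta_gamma : ∀ (i : ℕ) (hi : i + 1 < n) (hgen1 : i + m < n) (a b : Fin n),
      (a : ℕ) = i + m → (b : ℕ) = i →
      ζ (i + m) = (mval (S i hi 1) - 1) a b := by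
    intro i hi hgen1 a b ha hb
    by_cases hlt : i + m + 1 < n
    · rw [hζ]
      simp only []
      rw [dif_pos ⟨hlt, by omega⟩]
      have hp := S_pair m hm2 hmk φ hcp g S hS hrel i (by omega) hi hgen1 hlt
      have e1 : (mval (S (i + m) hlt 1) - 1) ⟨i + m + 1, hlt⟩ ⟨i + m + 1 - m, by omega⟩ =
          (mval (S (i + m) hlt 1) - 1) ⟨i + m + 1, hlt⟩ ⟨i + 1, hi⟩ :=
        entry_congr (by simp only [Fin.val_mk] <;> omega) (by simp only [Fin.val_mk] <;> omega)
      rw [e1, hp]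
      rw [neg_neg]
      exact entry_congr (by simp only [Fin.val_mk] <;> omega) (by simp only [Fin.val_mk] <;> omega)
    · have hieq : i + m = n - 1 := by omega
      rw [hζ]
      simp only []
      rw [dif_neg (by omega)]
      rw [dif_pos hieq]
      have hidx : n - 1 - m = i := by omega
      rw [S_congr S (show n - 1 - m = i from by omega) (by omega) hi (1 : K)]
      exact entry_congr (by simp only [Fin.val_mk] <;> omega) (by simp only [Fin.val_mk] <;> omega)
  -- ζ i is minus the `δ`-coefficient of generator i
  have hzeta_delta : ∀ (i : ℕ) (hi : i + 1 < n) (hm_le : m ≤ i + 1) (a b : Fin n),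
      (a : ℕ) = i + 1 → (b : ℕ) + m = i + 1 →
      ζ i = -((mval (S i hi 1) - 1) a b) := by
    intro i hi hm_le a b ha hb
    rw [hζ]
    simp only []
    rw [dif_pos ⟨hi, hm_le⟩]
    congr 1
    exact entry_congr (by simp only [Fin.val_mk] <;> omega) (by simp only [Fin.val_mk] <;> omega)
  -- assemble
  refine ⟨g * z, ?_⟩
  intro i hi β
  set F1 : UTg n K := ⁅(sg i hi β)⁻¹, z⁻¹⁆ with hF1
  set F2 : UTg n K := z⁻¹ * S i hi β * z with hF2
  refine ⟨F1 * F2, ?_, ?_⟩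
  · -- depth m + 1
    have hF1d : depM m F1 := by
      have := depM_commutator (depM.one' (sg i hi β)⁻¹) hzdep.inv
      rwa [show 1 + (m - 1) = m from by omega] at this
    have hF2d : depM m F2 := by
      rw [hF2]
      have := (hS i hi β).conj z⁻¹
      rwa [inv_inv] at this
    refine depM_succ_of_coords (hF1d.mul hF2d) ?_
    intro a b hab
    have hbl : (b : ℕ) + (m - 1) < n := by have := a.isLt; omega
    have hbl' : (b : ℕ) + 1 < n := by have := a.isLt; omega
    set l : Fin n := ⟨(b : ℕ) + (m - 1), hbl⟩ with hldef
    set l' : Fin n := ⟨(b : ℕ) + 1, hbl'⟩ with hl'def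
    have vl : (l : ℕ) = (b : ℕ) + (m - 1) := rfl
    have vl' : (l' : ℕ) = (b : ℕ) + 1 := rfl
    rw [coord_mul (by omega) hF1d hF2d a b hab]
    have cF2 : (mval F2 - 1) a b = (mval (S i hi β) - 1) a b := by
      rw [hF2, show z⁻¹ * S i hi β * z = z⁻¹ * S i hi β * (z⁻¹)⁻¹ from by rw [inv_inv]]
      exact coord_conj (by omega) z⁻¹ (hS i hi β) a b hab
    rw [cF2]
    have cF1 : (mval F1 - 1) a b =
        (mval (sg i hi β)⁻¹ - 1) a l * (mval z⁻¹ - 1) l b -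
          (mval z⁻¹ - 1) a l' * (mval (sg i hi β)⁻¹ - 1) l' b := by
      rw [hF1]
      exact coord_commutator le_rfl (by omega) (depM.one' _) hzdep.inv a b
        (by omega) l l' vl (by omega)
    rw [cF1, sg_inv_sub_one]
    have czinv_lb : (mval z⁻¹ - 1) l b = -(ζ ((l : ℕ))) := by
      rw [coord_inv (by omega) hzdep l b (by omega), zcoord l b (by omega)]
    have czinv_al' : (mval z⁻¹ - 1) a l' = -(ζ ((a : ℕ))) := by
      rw [coord_inv (by omega) hzdep a l' (by omega), zcoord a l' (by omega)]
    rw [czinv_lb, czinv_al']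
    by_cases hbi : (b : ℕ) = i
    · -- gamma case
      have ha' : (a : ℕ) = i + m := by omega
      rw [Emat_apply_ne (a := a) (b := l) (Or.inl (by simp only [Fin.val_mk] <;> omega))]
      rw [show Emat ⟨i + 1, hi⟩ ⟨i, by omega⟩ (-β) l' b = -β from by
        rw [Emat_apply, if_pos ⟨Fin.ext (by simp only [Fin.val_mk] <;> omega), Fin.ext (by simp only [Fin.val_mk] <;> omega)⟩]]
      rw [S_linear m hm2 hmk φ g S hS hrel hK i hi β a b hab]
      rw [← hzeta_gamma i hi (by omega) a b ha' hbi]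
      rw [show (a : ℕ) = i + m from ha']
      ring
    · by_cases hbm : (b : ℕ) + m = i + 1
      · -- delta case
        have ha' : (a : ℕ) = i + 1 := by omega
        rw [show Emat ⟨i + 1, hi⟩ ⟨i, by omega⟩ (-β) a l = -β from by
          rw [Emat_apply, if_pos ⟨Fin.ext (by simp only [Fin.val_mk] <;> omega), Fin.ext (by simp only [Fin.val_mk] <;> omega)⟩]]
        rw [Emat_apply_ne (a := l') (b := b) (Or.inr (by simp only [Fin.val_mk] <;> omega))]
        rw [S_linear m hm2 hmk φ g S hS hrel hK i hi β a b hab]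
        rw [show ζ ((l : ℕ)) = ζ i from by rw [vl]; congr 1; omega]
        rw [hzeta_delta i hi (by omega) a b ha' hbm]
        ring
      · -- zero case
        rw [Emat_apply_ne (a := a) (b := l) (Or.inr (by simp only [Fin.val_mk] <;> omega))]
        rw [Emat_apply_ne (a := l') (b := b) (Or.inr (by simp only [Fin.val_mk] <;> omega))]
        rw [S_support m hm2 hmk φ hcp g S hS hrel i hi β a b hab hbi hbm]
        ring
  · -- the quotient relation
    rw [hrel i hi β]
    rw [hF1, hF2, commutatorElement_def]
    simp only [_root_.map_mul, map_inv]
    group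


end GammaAux

/-- If `K` is a prime field (its prime subfield is all of `K`,
i.e. `K = F_p` or `K = ℚ`), `n ≥ 3` and `2 ≤ k ≤ n`, then every class preserving
automorphism of `Γ_{n,k} = UT_n(K)/γ_k(UT_n(K))` is inner. -/
theorem Gamma_class_preserving_eq_inner_of_prime_field (n k : ℕ) (K : Type*) [Field K]
    (hK : (⊥ : Subfield K) = ⊤) (hn : 3 ≤ n) (hk2 : 2 ≤ k) (hkn : k ≤ n) :
    ∀ φ : MulAut (Gamma n k K), (∀ x, IsConj x (φ x)) →
      ∃ g : Gamma n k K, φ = MulAut.conj g := by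
  intro φ hcp
  have main : ∀ m, 2 ≤ m → m ≤ k → GammaAux.Pm φ m := by
    intro m hm
    induction m, hm using Nat.le_induction with
    | base => intro _; exact GammaAux.Pm_base hk2 φ hcp
    | succ m hm ih =>
      intro hmk
      exact GammaAux.Pm_step hK hm (by omega) hkn φ hcp (ih (by omega))
  obtain ⟨g, hg⟩ := main k hk2 le_rfl
  refine ⟨GammaAux.piq n k K g, ?_⟩
  apply MulEquiv.ext
  intro x
  obtain ⟨u, rfl⟩ := GammaAux.piq_surj k x
  have hmem := GammaAux.mem_closure_simple u
  refine Subgroup.closure_induction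
    (p := fun v _ => φ (GammaAux.piq n k K v) =
      MulAut.conj (GammaAux.piq n k K g) (GammaAux.piq n k K v)) ?_ ?_ ?_ ?_ hmem
  · rintro v ⟨i, hi, β, rfl⟩
    obtain ⟨Sv, hdep, heq⟩ := hg i hi β
    have hS1 : GammaAux.piq n k K Sv = 1 := (GammaAux.piq_one_iff (by omega) Sv).mpr hdep
    rw [MulAut.conj_apply]
    show φ (GammaAux.piq n k K (GammaAux.sg i hi β)) =
      GammaAux.piq n k K g * GammaAux.piq n k K (GammaAux.sg i hi β) *
        (GammaAux.piq n k K g)⁻¹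
    rw [heq, hS1, mul_one]
  · simp
  · intro v w _ _ ihv ihw
    rw [_root_.map_mul, _root_.map_mul, ihv, ihw, ← _root_.map_mul, ← _root_.map_mul]
  · intro v _ ihv
    rw [map_inv, map_inv, ihv, ← map_inv]
end

section
/- Let G_3^(m) = UT_3(F_{p^m}) (which is nilpotent of class 2). Every central automorphism of G_3^(m) that fixes each generator t_{2,1}(θ^k) and t_{3,2}(θ^k) up to multiplication by a central element is class preserving; in particular, every basis conjugating automorphism of G_3^(m) is class preserving. -/
open Matrix

section Aux
variable {F : Type*} [Field F]

def Mmat (a b c : F) : Matrix (Fin 3) (Fin 3) F := !![1,0,0; a,1,0; c,b,1]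

lemma Mmat_mul (a b c a' b' c' : F) :
    Mmat a b c * Mmat a' b' c' = Mmat (a+a') (b+b') (c+c'+b*a') := by
  ext i j
  fin_cases i <;> fin_cases j <;>
    simp [Mmat, Matrix.mul_apply, Fin.sum_univ_three] <;> ring

lemma Mmat_zero : (Mmat 0 0 0 : Matrix (Fin 3) (Fin 3) F) = 1 := by
  ext i j
  fin_cases i <;> fin_cases j <;> simp [Mmat, Matrix.one_apply, Matrix.vecHead, Matrix.vecTail]

lemma Mmat_isLowerUni (a b c : F) : IsLowerUni (Mmat a b c) := by
  constructor
  · intro i; fin_cases i <;> simp [Mmat]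
  · intro i j hij; fin_cases i <;> fin_cases j <;> simp [Mmat] <;> exact absurd hij (by decide)

def Munit (a b c : F) : (Matrix (Fin 3) (Fin 3) F)ˣ where
  val := Mmat a b c
  inv := Mmat (-a) (-b) (a*b - c)
  val_inv := by rw [Mmat_mul, show a + -a = 0 by ring, show b + -b = 0 by ring,
    show c + (a*b - c) + b * -a = 0 by ring, Mmat_zero]
  inv_val := by rw [Mmat_mul, show -a + a = 0 by ring, show -b + b = 0 by ring,
    show (a*b - c) + c + -b * a = 0 by ring, Mmat_zero]

def gU (a b c : F) : UT 3 F :=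
  ⟨Munit a b c, ⟨Mmat_isLowerUni a b c, Mmat_isLowerUni (-a) (-b) (a*b - c)⟩⟩

lemma gU_eq {a a' b b' c c' : F} (h1 : a = a') (h2 : b = b') (h3 : c = c') :
    gU a b c = gU a' b' c' := by subst h1; subst h2; subst h3; rfl

lemma gU_mul (a b c a' b' c' : F) :
    gU a b c * gU a' b' c' = gU (a+a') (b+b') (c+c'+b*a') :=
  Subtype.ext (Units.ext (Mmat_mul a b c a' b' c'))

lemma gU_inv (a b c : F) : (gU a b c)⁻¹ = gU (-a) (-b) (a*b - c) :=
  Subtype.ext (Units.ext rfl)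

lemma exists_gU (A : UT 3 F) : ∃ a b c : F, A = gU a b c := by
  obtain ⟨hd, hu⟩ := A.2.1
  refine ⟨A.1.val 1 0, A.1.val 2 1, A.1.val 2 0, ?_⟩
  refine Subtype.ext (Units.ext ?_)
  show A.1.val = Mmat _ _ _
  ext i j
  fin_cases i <;> fin_cases j <;>
    first
      | exact hd _
      | exact hu _ _ (by decide)
      | rfl
      | simp [Mmat, hd 0, hd 1, hd 2]

lemma gU_apply₃ (a b c : F) :
    ((gU a b c : (Matrix (Fin 3) (Fin 3) F)ˣ) : Matrix (Fin 3) (Fin 3) F) 2 0 = c := by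
  simp [gU, Munit, Mmat]

lemma gU_inj₃ {a b c a' b' c' : F} (h : gU a b c = gU a' b' c') : c = c' := by
  have := congrArg (fun X : UT 3 F =>
    ((X : (Matrix (Fin 3) (Fin 3) F)ˣ) : Matrix (Fin 3) (Fin 3) F) 2 0) h
  simpa [gU_apply₃] using this

lemma gU_center (c : F) : gU (0:F) 0 c ∈ Subgroup.center (UT 3 F) := by
  rw [Subgroup.mem_center_iff]
  intro h
  obtain ⟨a', b', c', rfl⟩ := exists_gU h
  rw [gU_mul, gU_mul]
  exact gU_eq (by ring) (by ring) (by ring)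

lemma center_form {A : UT 3 F} (hA : A ∈ Subgroup.center (UT 3 F)) :
    ∃ d : F, A = gU 0 0 d := by
  obtain ⟨a, b, c, rfl⟩ := exists_gU A
  have h1 := Subgroup.mem_center_iff.1 hA (gU 1 0 0)
  have h2 := Subgroup.mem_center_iff.1 hA (gU 0 1 0)
  rw [gU_mul, gU_mul] at h1 h2
  have e1 := gU_inj₃ h1
  have e2 := gU_inj₃ h2
  have hb : b = 0 := by linear_combination -e1
  have ha : a = 0 := by linear_combination e2
  exact ⟨c, gU_eq ha hb rfl⟩

lemma isConj_gU (a b c d : F) (h : ¬(a = 0 ∧ b = 0)) :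
    IsConj (gU a b c) (gU a b (c + d)) := by
  rw [isConj_iff]
  by_cases ha : a = 0
  · have hb : b ≠ 0 := fun h' => h ⟨ha, h'⟩
    refine ⟨gU (-d/b) 0 0, ?_⟩
    rw [gU_inv, gU_mul, gU_mul]
    exact gU_eq (by ring) (by ring) (by field_simp; ring)
  · refine ⟨gU 0 (d/a) 0, ?_⟩
    rw [gU_inv, gU_mul, gU_mul]
    exact gU_eq (by ring) (by ring) (by field_simp; ring)

lemma comm_central (A B : UT 3 F) :
    A * B * A⁻¹ * B⁻¹ ∈ Subgroup.center (UT 3 F) := by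
  obtain ⟨a, b, c, rfl⟩ := exists_gU A
  obtain ⟨a', b', c', rfl⟩ := exists_gU B
  rw [gU_inv, gU_inv, gU_mul, gU_mul, gU_mul,
    show (a + a' + -a + -a' : F) = 0 by ring, show (b + b' + -b + -b' : F) = 0 by ring]
  exact gU_center _

lemma central_classPreserving (φ : MulAut (UT 3 F))
    (hφ : ∀ A : UT 3 F, φ A * A⁻¹ ∈ Subgroup.center (UT 3 F)) (A : UT 3 F) :
    IsConj A (φ A) := by
  have phi_fix : ∀ c : F, φ (gU 0 0 c) = gU 0 0 c := by
    intro c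
    obtain ⟨e, he⟩ := center_form (hφ (gU 1 0 0))
    obtain ⟨f, hf⟩ := center_form (hφ (gU 0 (-c) 0))
    have hu' : φ (gU 1 0 0) = gU 1 0 e := by
      have h2 : φ (gU 1 0 0) = gU 0 0 e * gU 1 0 0 := by rw [← he, inv_mul_cancel_right]
      rw [h2, gU_mul]; exact gU_eq (by ring) (by ring) (by ring)
    have hv' : φ (gU 0 (-c) 0) = gU 0 (-c) f := by
      have h2 : φ (gU 0 (-c) 0) = gU 0 0 f * gU 0 (-c) 0 := by rw [← hf, inv_mul_cancel_right]
      rw [h2, gU_mul]; exact gU_eq (by ring) (by ring) (by ring)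
    calc φ (gU 0 0 c)
        = φ (gU 1 0 0 * gU 0 (-c) 0 * (gU 1 0 0)⁻¹ * (gU 0 (-c) 0)⁻¹) := by
          rw [show gU 1 0 0 * gU 0 (-c) 0 * (gU 1 0 0)⁻¹ * (gU 0 (-c) 0)⁻¹ = gU 0 0 c from by
            rw [gU_inv, gU_inv, gU_mul, gU_mul, gU_mul]
            exact gU_eq (by ring) (by ring) (by ring)]
      _ = gU 1 0 e * gU 0 (-c) f * (gU 1 0 e)⁻¹ * (gU 0 (-c) f)⁻¹ := by
          simp only [_root_.map_mul, map_inv, hu', hv']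
      _ = gU 0 0 c := by
          rw [gU_inv, gU_inv, gU_mul, gU_mul, gU_mul]
          exact gU_eq (by ring) (by ring) (by ring)
  obtain ⟨a, b, c, rfl⟩ := exists_gU A
  by_cases h : a = 0 ∧ b = 0
  · obtain ⟨rfl, rfl⟩ := h
    rw [phi_fix]
  · obtain ⟨d, hd⟩ := center_form (hφ (gU a b c))
    have h3 : φ (gU a b c) = gU a b (c + d) := by
      have h2 : φ (gU a b c) = gU 0 0 d * gU a b c := by rw [← hd, inv_mul_cancel_right]
      rw [h2, gU_mul]; exact gU_eq (by ring) (by ring) (by ring)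
    rw [h3]
    exact isConj_gU a b c d h

lemma S_mul (φ : MulAut (UT 3 F)) {A B : UT 3 F}
    (hA : φ A * A⁻¹ ∈ Subgroup.center (UT 3 F))
    (hB : φ B * B⁻¹ ∈ Subgroup.center (UT 3 F)) :
    φ (A * B) * (A * B)⁻¹ ∈ Subgroup.center (UT 3 F) := by
  have hc := Subgroup.mem_center_iff.1 hB (φ A)
  have h1 : φ (A * B) * (A * B)⁻¹ = (φ B * B⁻¹) * (φ A * A⁻¹) := by
    rw [_root_.map_mul, _root_.mul_inv_rev]
    calc φ A * φ B * (B⁻¹ * A⁻¹) = φ A * (φ B * B⁻¹) * A⁻¹ := by group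
      _ = (φ B * B⁻¹) * φ A * A⁻¹ := by rw [hc]
      _ = (φ B * B⁻¹) * (φ A * A⁻¹) := by group
  rw [h1]
  exact mul_mem hB hA

lemma S_inv (φ : MulAut (UT 3 F)) {A : UT 3 F}
    (hA : φ A * A⁻¹ ∈ Subgroup.center (UT 3 F)) :
    φ A⁻¹ * (A⁻¹)⁻¹ ∈ Subgroup.center (UT 3 F) := by
  have hcomm : A * φ A = φ A * A := by
    have h := Subgroup.mem_center_iff.1 hA A
    calc A * φ A = (A * (φ A * A⁻¹)) * A := by group
      _ = ((φ A * A⁻¹) * A) * A := by rw [h]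
      _ = φ A * A := by group
  have h2 : φ A⁻¹ * (A⁻¹)⁻¹ = (φ A * A⁻¹)⁻¹ := by
    rw [map_inv, inv_inv, _root_.mul_inv_rev, inv_inv]
    exact ((Commute.inv_right (hcomm : Commute A (φ A))).symm : _)
  rw [h2]
  exact inv_mem hA

lemma gen1_val (α : F) :
    ((gU α 0 0 : (Matrix (Fin 3) (Fin 3) F)ˣ) : Matrix (Fin 3) (Fin 3) F) =
      1 + Matrix.single 1 0 α := by
  show Mmat α 0 0 = _
  ext i j
  fin_cases i <;> fin_cases j <;>
    simp [Mmat, Matrix.single, Matrix.one_apply, Matrix.vecHead, Matrix.vecTail]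

lemma gen2_val (α : F) :
    ((gU 0 α 0 : (Matrix (Fin 3) (Fin 3) F)ˣ) : Matrix (Fin 3) (Fin 3) F) =
      1 + Matrix.single 2 1 α := by
  show Mmat 0 α 0 = _
  ext i j
  fin_cases i <;> fin_cases j <;>
    simp [Mmat, Matrix.single, Matrix.one_apply, Matrix.vecHead, Matrix.vecTail]
end Aux

/-- Let `G₃⁽ᵐ⁾ = UT_3(F_{p^m})` (a nilpotent group of class 2).
Every central automorphism of `G₃⁽ᵐ⁾` — i.e. every automorphism moving each
element (in particular each generator `t_{2,1}(θ^k)`, `t_{3,2}(θ^k)`) only by a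
central factor — is class preserving; in particular every basis conjugating
automorphism (one sending each generating transvection `t_{2,1}(α)`,
`t_{3,2}(α)` to a conjugate of itself) is class preserving. -/
theorem UT3_central_and_basis_conjugating_are_class_preserving
    (p m : ℕ) (hp : p.Prime) (hm : 1 ≤ m) (F : Type*) [Field F] [Fintype F]
    (hF : Fintype.card F = p ^ m) :
    (∀ φ : MulAut (UT 3 F),
        (∀ A : UT 3 F, φ A * A⁻¹ ∈ Subgroup.center (UT 3 F)) →
        ∀ A : UT 3 F, IsConj A (φ A)) ∧
      (∀ φ : MulAut (UT 3 F),
        (∀ A : UT 3 F, (∃ α : F,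
            ((A : (Matrix (Fin 3) (Fin 3) F)ˣ) : Matrix (Fin 3) (Fin 3) F) =
                1 + Matrix.single 1 0 α ∨
            ((A : (Matrix (Fin 3) (Fin 3) F)ˣ) : Matrix (Fin 3) (Fin 3) F) =
                1 + Matrix.single 2 1 α) → IsConj A (φ A)) →
        ∀ A : UT 3 F, IsConj A (φ A)) := by
  constructor
  · intro φ hφ A
    exact central_classPreserving φ hφ A
  · intro φ hgen A
    apply central_classPreserving φ
    intro B
    have hu : ∀ α : F, φ (gU α 0 0) * (gU α 0 0)⁻¹ ∈ Subgroup.center (UT 3 F) := by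
      intro α
      obtain ⟨h, hh⟩ := isConj_iff.1 (hgen (gU α 0 0) ⟨α, Or.inl (gen1_val α)⟩)
      rw [← hh]
      exact comm_central h (gU α 0 0)
    have hv : ∀ α : F, φ (gU 0 α 0) * (gU 0 α 0)⁻¹ ∈ Subgroup.center (UT 3 F) := by
      intro α
      obtain ⟨h, hh⟩ := isConj_iff.1 (hgen (gU 0 α 0) ⟨α, Or.inr (gen2_val α)⟩)
      rw [← hh]
      exact comm_central h (gU 0 α 0)
    obtain ⟨a, b, c, rfl⟩ := exists_gU B
    have hc : φ (gU 0 0 c) * (gU 0 0 c)⁻¹ ∈ Subgroup.center (UT 3 F) := by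
      rw [show gU (0:F) 0 c = gU 1 0 0 * gU 0 (-c) 0 * (gU 1 0 0)⁻¹ * (gU 0 (-c) 0)⁻¹ from by
        rw [gU_inv, gU_inv, gU_mul, gU_mul, gU_mul]
        exact gU_eq (by ring) (by ring) (by ring)]
      exact S_mul φ (S_mul φ (S_mul φ (hu 1) (hv (-c))) (S_inv φ (hu 1))) (S_inv φ (hv (-c)))
    rw [show gU a b c = gU 0 0 c * gU a 0 0 * gU 0 b 0 from by
      rw [gU_mul, gU_mul]
      exact gU_eq (by ring) (by ring) (by ring)]
    exact S_mul φ (S_mul φ hc (hu a)) (hv b)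
end

section
/- In the group G = ⟨x, y | x² = y²⟩, the automorphism φ defined by φ(x) = x⁻¹, φ(y) = y⁻¹ is a well-defined automorphism that is not class preserving: the central element x² is sent to x⁻², and x⁻² is not conjugate to x² in G (indeed g⁻¹x²g = x² for all g ∈ G while x² ≠ x⁻²). -/
/-- The relator set of the presentation `⟨x, y ∣ x² = y²⟩`. -/
def torusRels : Set (FreeGroup (Fin 2)) :=
  {FreeGroup.of 0 ^ 2 * (FreeGroup.of 1 ^ 2)⁻¹}

/-- The group `G = ⟨x, y ∣ x² = y²⟩`. -/
abbrev TorusGroup : Type := PresentedGroup torusRels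

lemma torus_rel : (PresentedGroup.of 0 : TorusGroup) ^ 2 = (PresentedGroup.of 1) ^ 2 := by
  have h : PresentedGroup.mk torusRels (FreeGroup.of 0 ^ 2 * (FreeGroup.of 1 ^ 2)⁻¹) = 1 := by
    apply (QuotientGroup.eq_one_iff _).2
    exact Subgroup.subset_normalClosure rfl
  have h2 := h
  rw [map_mul, map_inv, map_pow, map_pow] at h2
  have : (PresentedGroup.of 0 : TorusGroup) ^ 2 * ((PresentedGroup.of 1 : TorusGroup) ^ 2)⁻¹ = 1 := h2
  group at this ⊢
  exact mul_inv_eq_one.mp this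

/-- map to ℤ sending both generators to 1 -/
noncomputable def torusDeg : TorusGroup →* Multiplicative ℤ :=
  PresentedGroup.toGroup (f := fun _ => Multiplicative.ofAdd (1 : ℤ)) (by
    rintro r rfl
    simp [map_mul, map_inv, map_pow, FreeGroup.lift_apply_of])

/-- inversion hom -/
noncomputable def torusInv : TorusGroup →* TorusGroup :=
  PresentedGroup.toGroup (f := fun i => (PresentedGroup.of i : TorusGroup)⁻¹) (by
    rintro r rfl
    rw [map_mul, map_inv, map_pow, map_pow, FreeGroup.lift_apply_of, FreeGroup.lift_apply_of,
      inv_pow, inv_pow, ← torus_rel]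
    group)

lemma torusInv_of (i : Fin 2) : torusInv (PresentedGroup.of i) = (PresentedGroup.of i)⁻¹ :=
  PresentedGroup.toGroup.of _

lemma torusInv_invol : torusInv.comp torusInv = MonoidHom.id TorusGroup := by
  apply PresentedGroup.ext
  intro i
  simp [torusInv_of, MonoidHom.comp_apply, map_inv]

/-- In `G = ⟨x, y ∣ x² = y²⟩` the assignment
`x ↦ x⁻¹`, `y ↦ y⁻¹` extends to an automorphism `φ` of `G` which is not class
preserving: `φ` sends the central element `x²` to `x⁻²`, every conjugate
`g⁻¹ x² g` equals `x²` while `x² ≠ x⁻²`, so `x²` is not conjugate to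
`φ(x²) = x⁻²`. -/
theorem torusGroup_inversion_not_class_preserving :
    ∃ φ : MulAut TorusGroup,
      φ (PresentedGroup.of 0) = (PresentedGroup.of 0)⁻¹ ∧
      φ (PresentedGroup.of 1) = (PresentedGroup.of 1)⁻¹ ∧
      φ ((PresentedGroup.of 0 : TorusGroup) ^ 2) =
        ((PresentedGroup.of 0 : TorusGroup) ^ 2)⁻¹ ∧
      (∀ g : TorusGroup, g⁻¹ * (PresentedGroup.of 0) ^ 2 * g =
        (PresentedGroup.of 0) ^ 2) ∧
      ((PresentedGroup.of 0 : TorusGroup) ^ 2) ≠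
        ((PresentedGroup.of 0 : TorusGroup) ^ 2)⁻¹ ∧
      ¬ IsConj ((PresentedGroup.of 0 : TorusGroup) ^ 2)
        (φ ((PresentedGroup.of 0 : TorusGroup) ^ 2)) := by
  classical
  have hinv : ∀ z, torusInv (torusInv z) = z := fun z => by
    simpa using DFunLike.congr_fun torusInv_invol z
  refine ⟨{ toFun := torusInv, invFun := torusInv, left_inv := hinv, right_inv := hinv,
            map_mul' := map_mul torusInv }, ?_, ?_, ?_, ?_, ?_, ?_⟩
  · exact torusInv_of 0
  · exact torusInv_of 1
  · have : torusInv ((PresentedGroup.of 0 : TorusGroup) ^ 2) =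
        ((PresentedGroup.of 0 : TorusGroup) ^ 2)⁻¹ := by
      rw [map_pow, torusInv_of, inv_pow]
    exact this
  · -- centrality
    have hx : ∀ g : TorusGroup,
        g ∈ Subgroup.centralizer {(PresentedGroup.of 0 : TorusGroup) ^ 2} := by
      apply PresentedGroup.generated_by
      intro j
      rw [Subgroup.mem_centralizer_iff]
      rintro h rfl
      fin_cases j
      · exact (Commute.refl _).pow_left 2
      · rw [torus_rel]; exact (Commute.refl _).pow_left 2
    intro g
    have := Subgroup.mem_centralizer_iff.mp (hx g) _ rfl
    rw [mul_assoc, this]; group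
  · intro h
    have := congrArg torusDeg h
    rw [map_inv, map_pow] at this
    have h0 : torusDeg (PresentedGroup.of 0) = Multiplicative.ofAdd (1:ℤ) :=
      PresentedGroup.toGroup.of _
    rw [h0] at this
    have h2 := congrArg Multiplicative.toAdd this
    simp only [toAdd_pow, toAdd_inv, toAdd_ofAdd, smul_eq_mul, nsmul_eq_mul,
      Nat.cast_ofNat, mul_one] at h2
    omega
  · rintro ⟨c, hc⟩
    have hne : ((PresentedGroup.of 0 : TorusGroup) ^ 2) ≠
        ((PresentedGroup.of 0 : TorusGroup) ^ 2)⁻¹ := by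
      intro h
      have := congrArg torusDeg h
      rw [map_inv, map_pow] at this
      have h0 : torusDeg (PresentedGroup.of 0) = Multiplicative.ofAdd (1:ℤ) :=
        PresentedGroup.toGroup.of _
      rw [h0] at this
      have h2 := congrArg Multiplicative.toAdd this
      simp only [toAdd_pow, toAdd_inv, toAdd_ofAdd, smul_eq_mul, nsmul_eq_mul,
        Nat.cast_ofNat, mul_one] at h2
      omega
    have hcent : ∀ g : TorusGroup,
        g ∈ Subgroup.centralizer {(PresentedGroup.of 0 : TorusGroup) ^ 2} := by
      apply PresentedGroup.generated_by
      intro j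
      rw [Subgroup.mem_centralizer_iff]
      rintro h rfl
      fin_cases j
      · exact (Commute.refl _).pow_left 2
      · rw [torus_rel]; exact (Commute.refl _).pow_left 2
    have hcomm := Subgroup.mem_centralizer_iff.mp (hcent c) _ rfl
    have hφ : (torusInv ((PresentedGroup.of 0 : TorusGroup) ^ 2)) =
        ((PresentedGroup.of 0 : TorusGroup) ^ 2)⁻¹ := by
      rw [map_pow, torusInv_of, inv_pow]
    have hc2 : (c : TorusGroup) * (PresentedGroup.of 0 : TorusGroup) ^ 2 =
        torusInv ((PresentedGroup.of 0 : TorusGroup) ^ 2) * c := hc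
    rw [hφ] at hc2
    exact hne (mul_right_cancel (hcomm.trans hc2))
end
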